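/- arXiv:2102.02686 — 7 statements merged into one kernel-verified Lean document; each statement's English description precedes it below -/
import Mathlib

section
/- Let V be a finite-dimensional real inner product space, S ⊆ V a finite set of unit vectors achieved as −Proj_{F} f*/‖Proj_F f*‖ over subspaces F spanned by faces of a polyhedral cone σ, and suppose a linear functional f takes a negative value on σ. If s is the unique point of the unit sphere intersected with σ at which f attains its minimum, and s lies in the relative interior of a face F of σ, then s = −Proj_{span F} f* / ‖Proj_{span F} f*‖. -/
/-!
On `W = span F` the functional `f` is `⟪·, p⟫` with `p = Proj_W f*`, and `f s < 0` because `σ`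
is a cone, so `p ≠ 0`. With `u = -p / ‖p‖`, the point `s` locally maximises `⟪·, u⟫` on the unit
sphere of `W`, since nearby unit vectors of `W` stay in the face. If `s ≠ u`, renormalising
`(1 - t) s + t u` for small `t > 0` gives unit vectors of `W` arbitrarily close to `s` with a
strictly larger inner product with `u`; hence `s = u`.
-/

open RealInnerProductSpace Filter Topology

section Sphere

variable {V : Type*} [NormedAddCommGroup V] [InnerProductSpace ℝ V]

lemma norm_convexComb_le_one {s u : V} (hs : ‖s‖ = 1) (hu : ‖u‖ = 1) {t : ℝ} (ht₀ : 0 ≤ t)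
    (ht₁ : t ≤ 1) : ‖(1 - t) • s + t • u‖ ≤ 1 :=
  calc ‖(1 - t) • s + t • u‖ ≤ ‖(1 - t) • s‖ + ‖t • u‖ := norm_add_le _ _
    _ = 1 := by
      rw [norm_smul, norm_smul, hs, hu, Real.norm_of_nonneg ht₀,
        Real.norm_of_nonneg (sub_nonneg.2 ht₁)]
      ring

/-- Moving from `s` towards `u` and renormalising increases the inner product with `u`:
the numerator grows linearly while, by convexity, the norm does not exceed `1`. -/
lemma inner_lt_inner_normalize_convexComb {s u : V} (hs : ‖s‖ = 1) (hu : ‖u‖ = 1)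
    (hsu₀ : 0 ≤ ⟪s, u⟫) (hsu₁ : ⟪s, u⟫ < 1) {t : ℝ} (ht₀ : 0 < t) (ht₁ : t ≤ 1) :
    (1 - t) • s + t • u ≠ 0 ∧
      ⟪s, u⟫ < ⟪‖(1 - t) • s + t • u‖⁻¹ • ((1 - t) • s + t • u), u⟫ := by
  set z := (1 - t) • s + t • u
  have hzu : ⟪z, u⟫ = ⟪s, u⟫ + t * (1 - ⟪s, u⟫) := by
    simp only [z, inner_add_left, real_inner_smul_left, real_inner_self_eq_norm_sq, hu]
    ring
  have hlt : ⟪s, u⟫ < ⟪z, u⟫ := by rw [hzu]; nlinarith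
  have hz : z ≠ 0 := by rintro hz; rw [hz, inner_zero_left] at hlt; linarith
  refine ⟨hz, hlt.trans_le ?_⟩
  rw [real_inner_smul_left, inv_mul_eq_div]
  exact le_div_self (by linarith) (norm_pos_iff.2 hz) (norm_convexComb_le_one hs hu ht₀.le ht₁)

lemma tendsto_normalize_convexComb {s : V} (hs : ‖s‖ = 1) (u : V) :
    Tendsto (fun t : ℝ ↦ ‖(1 - t) • s + t • u‖⁻¹ • ((1 - t) • s + t • u)) (𝓝 0) (𝓝 s) := by
  have hcont : Continuous fun t : ℝ ↦ (1 - t) • s + t • u := by fun_prop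
  have hnorm : ContinuousAt (fun t : ℝ ↦ ‖(1 - t) • s + t • u‖⁻¹) 0 :=
    (hcont.norm.continuousAt).inv₀ (by simp [hs])
  have h := hnorm.tendsto.smul (hcont.tendsto 0)
  rwa [sub_zero, one_smul, zero_smul, add_zero, hs, inv_one, one_smul] at h

lemma exists_unit_near_inner_gt {W : Submodule ℝ V} {s u : V} (hsW : s ∈ W) (huW : u ∈ W)
    (hs : ‖s‖ = 1) (hu : ‖u‖ = 1) (hsu₀ : 0 ≤ ⟪s, u⟫) (hsu₁ : ⟪s, u⟫ < 1) {ε : ℝ} (hε : 0 < ε) :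
    ∃ y ∈ W, ‖y‖ = 1 ∧ ‖y - s‖ < ε ∧ ⟪s, u⟫ < ⟪y, u⟫ := by
  have hclose : ∀ᶠ t in 𝓝[>] (0 : ℝ),
      dist (‖(1 - t) • s + t • u‖⁻¹ • ((1 - t) • s + t • u)) s < ε :=
    ((tendsto_normalize_convexComb hs u).mono_left nhdsWithin_le_nhds).eventually
      (Metric.ball_mem_nhds s hε)
  obtain ⟨t, hdist, ht₀, ht₁⟩ := (hclose.and (Ioo_mem_nhdsGT one_pos)).exists
  obtain ⟨hz, hgt⟩ := inner_lt_inner_normalize_convexComb hs hu hsu₀ hsu₁ ht₀ ht₁.le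
  exact ⟨_, W.smul_mem _ (W.add_mem (W.smul_mem _ hsW) (W.smul_mem _ huW)),
    norm_smul_inv_norm hz, by rwa [← dist_eq_norm], hgt⟩

lemma eq_of_forall_inner_le_of_norm_sub_lt {W : Submodule ℝ V} {s u : V} (hsW : s ∈ W)
    (huW : u ∈ W) (hs : ‖s‖ = 1) (hu : ‖u‖ = 1) (hsu : 0 ≤ ⟪s, u⟫)
    (hloc : ∃ ε > 0, ∀ y ∈ W, ‖y‖ = 1 → ‖y - s‖ < ε → ⟪y, u⟫ ≤ ⟪s, u⟫) : s = u := by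
  by_contra hne
  have hsu₁ : ⟪s, u⟫ < 1 :=
    lt_of_le_of_ne (real_inner_le_norm s u |>.trans (by simp [hs, hu]))
      (mt (inner_eq_one_iff_of_norm_eq_one hs hu).1 hne)
  obtain ⟨ε, hε, hle⟩ := hloc
  obtain ⟨y, hyW, hy, hys, hgt⟩ := exists_unit_near_inner_gt hsW huW hs hu hsu hsu₁ hε
  exact (hle y hyW hy hys).not_gt hgt

lemma eq_neg_smul_of_forall_inner_le_of_norm_sub_lt {W : Submodule ℝ V} {s p : V} (hsW : s ∈ W)
    (hpW : p ∈ W) (hs : ‖s‖ = 1) (hsp : ⟪s, p⟫ < 0)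
    (hloc : ∃ ε > 0, ∀ y ∈ W, ‖y‖ = 1 → ‖y - s‖ < ε → ⟪s, p⟫ ≤ ⟪y, p⟫) :
    p ≠ 0 ∧ s = (-‖p‖⁻¹) • p := by
  have hp : p ≠ 0 := by rintro rfl; simp at hsp
  have hp₀ : 0 < ‖p‖ := norm_pos_iff.2 hp
  have hinner : ∀ y, ⟪y, (-‖p‖⁻¹) • p⟫ = -‖p‖⁻¹ * ⟪y, p⟫ := fun y ↦ real_inner_smul_right _ _ _
  refine ⟨hp, eq_of_forall_inner_le_of_norm_sub_lt hsW (W.smul_mem _ hpW) hs ?_ ?_ ?_⟩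
  · rw [norm_smul, norm_neg, norm_inv, norm_norm, inv_mul_cancel₀ hp₀.ne']
  · rw [hinner]; exact mul_nonneg_of_nonpos_of_nonpos (by simp [hp₀.le]) hsp.le
  · obtain ⟨ε, hε, hle⟩ := hloc
    refine ⟨ε, hε, fun y hyW hy hys ↦ ?_⟩
    rw [hinner, hinner]
    exact mul_le_mul_of_nonpos_left (hle y hyW hy hys) (by simp [hp₀.le])

end Sphere

lemma apply_neg_of_forall_le_of_norm_eq_one {V : Type*} [NormedAddCommGroup V] [NormedSpace ℝ V]
    {σ : Set V} (hσ : ∀ c : ℝ, 0 < c → ∀ x ∈ σ, c • x ∈ σ) {f : V →L[ℝ] ℝ}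
    (hneg : ∃ x ∈ σ, f x < 0) {s : V} (hmin : ∀ y ∈ σ, ‖y‖ = 1 → f s ≤ f y) : f s < 0 := by
  obtain ⟨x, hxσ, hfx⟩ := hneg
  have hx : x ≠ 0 := by rintro rfl; simp at hfx
  have hx₀ : 0 < ‖x‖⁻¹ := inv_pos.2 (norm_pos_iff.2 hx)
  calc f s ≤ f (‖x‖⁻¹ • x) := hmin _ (hσ _ hx₀ x hxσ) (norm_smul_inv_norm hx)
    _ = ‖x‖⁻¹ * f x := by simp
    _ < 0 := mul_neg_of_pos_of_neg hx₀ hfx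

lemma smul_mem_setOf_forall_nonneg {V ι G : Type*} [AddCommMonoid V] [Module ℝ V]
    [FunLike G V ℝ] [LinearMapClass G ℝ V ℝ] (g : ι → G) {c : ℝ} (hc : 0 ≤ c) {x : V}
    (hx : x ∈ {v | ∀ i, 0 ≤ g i v}) :
    c • x ∈ {v | ∀ i, 0 ≤ g i v} := fun i ↦ by
  simpa using mul_nonneg hc (hx i)

lemma Submodule.inner_starProjection_eq_of_mem {V : Type*} [NormedAddCommGroup V]
    [InnerProductSpace ℝ V] (W : Submodule ℝ V) [W.HasOrthogonalProjection] {y : V} (hy : y ∈ W)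
    (v : V) : ⟪y, W.starProjection v⟫ = ⟪y, v⟫ := by
  rw [← W.inner_starProjection_left_eq_right, W.starProjection_eq_self_iff.2 hy]

theorem min_point_eq_neg_normalized_proj_of_mem_relint_face_general
    {V : Type*} [NormedAddCommGroup V] [InnerProductSpace ℝ V] [FiniteDimensional ℝ V]
    {ι : Type*} (g : ι → V →L[ℝ] ℝ)
    (σ : Set V) (hσ : σ = {v | ∀ i, 0 ≤ g i v})
    (f : V →L[ℝ] ℝ) (fstar : V) (hfstar : ∀ x : V, f x = ⟪x, fstar⟫)
    (hneg : ∃ x ∈ σ, f x < 0)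
    (s : V) (hnorm : ‖s‖ = 1)
    (hmin : ∀ y ∈ σ, ‖y‖ = 1 → f s ≤ f y)
    (F : Set V) (h : V →L[ℝ] ℝ)
    (hF : F = σ ∩ {v | h v = 0})
    (hsF : s ∈ F)
    (hrelint : ∃ ε : ℝ, 0 < ε ∧ ∀ y ∈ Submodule.span ℝ F, ‖y - s‖ < ε → y ∈ F) :
    (Submodule.orthogonalProjection (Submodule.span ℝ F) fstar : V) ≠ 0 ∧
      s = (-‖(Submodule.orthogonalProjection (Submodule.span ℝ F) fstar : V)‖⁻¹) •
            (Submodule.orthogonalProjection (Submodule.span ℝ F) fstar : V) := by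
  set W := Submodule.span ℝ F
  change W.starProjection fstar ≠ 0 ∧
    s = (-‖W.starProjection fstar‖⁻¹) • W.starProjection fstar
  have hfW : ∀ y ∈ W, f y = ⟪y, W.starProjection fstar⟫ := fun y hy ↦ by
    rw [W.inner_starProjection_eq_of_mem hy, hfstar]
  have hsW : s ∈ W := Submodule.subset_span hsF
  have hFσ : F ⊆ σ := hF ▸ Set.inter_subset_left
  have hcone : ∀ c : ℝ, 0 < c → ∀ x ∈ σ, c • x ∈ σ := by
    subst hσ
    exact fun _ hc _ hx ↦ smul_mem_setOf_forall_nonneg g hc.le hx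
  have hfs : f s < 0 := apply_neg_of_forall_le_of_norm_eq_one hcone hneg hmin
  obtain ⟨ε, hε, hεF⟩ := hrelint
  refine eq_neg_smul_of_forall_inner_le_of_norm_sub_lt hsW (W.starProjection_apply_mem fstar) hnorm
    (hfW s hsW ▸ hfs) ⟨ε, hε, fun y hyW hy hys ↦ ?_⟩
  rw [← hfW s hsW, ← hfW y hyW]
  exact hmin y (hFσ (hεF y hyW hys)) hy

/-- Let `σ` be a polyhedral cone cut out by finitely many linear functionals, and let
`f` be a linear functional (with Riesz representative `f*`) taking a negative value on
`σ`. If `s` is the minimizer of `f` on the unit sphere intersected with `σ`, and `s`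
lies in the relative interior of a face `F` of `σ`, then
`s = -Proj_{span F} f* / ‖Proj_{span F} f*‖`. -/
theorem min_point_eq_neg_normalized_proj_of_mem_relint_face
    {V : Type*} [NormedAddCommGroup V] [InnerProductSpace ℝ V] [FiniteDimensional ℝ V]
    {ι : Type*} [Fintype ι] (g : ι → V →L[ℝ] ℝ)
    (σ : Set V) (hσ : σ = {v | ∀ i, 0 ≤ g i v})
    (f : V →L[ℝ] ℝ) (fstar : V) (hfstar : ∀ x : V, f x = ⟪x, fstar⟫)
    (hneg : ∃ x ∈ σ, f x < 0)
    (s : V) (hsσ : s ∈ σ) (hnorm : ‖s‖ = 1)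
    (hmin : ∀ y ∈ σ, ‖y‖ = 1 → f s ≤ f y)
    (F : Set V) (h : V →L[ℝ] ℝ) (hsupp : ∀ v ∈ σ, 0 ≤ h v)
    (hF : F = σ ∩ {v | h v = 0})
    (hsF : s ∈ F)
    (hrelint : ∃ ε : ℝ, 0 < ε ∧ ∀ y ∈ Submodule.span ℝ F, ‖y - s‖ < ε → y ∈ F) :
    (Submodule.orthogonalProjection (Submodule.span ℝ F) fstar : V) ≠ 0 ∧
      s = (-‖(Submodule.orthogonalProjection (Submodule.span ℝ F) fstar : V)‖⁻¹) •
            (Submodule.orthogonalProjection (Submodule.span ℝ F) fstar : V) :=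
  min_point_eq_neg_normalized_proj_of_mem_relint_face_general g σ hσ f fstar hfstar hneg s hnorm
    hmin F h hF hsF hrelint
end

section
/- Let V be a finite-dimensional real vector space with a lattice M ⊆ V such that M ⊗ ℝ = V, and suppose the inner product takes integer values on M × M. Let σ ⊆ V be a rational polyhedral cone and f : V → ℝ a linear functional taking integer values on M that assumes a negative value on σ. If f attains its minimum on S ∩ σ at s (S the unit sphere), then the ray ℝ_{>0}·s contains a nonzero lattice point of M, and a unique indivisible one. -/
open RealInnerProductSpace

open Finset in
private lemma ratSolvable' {m k : Type*} [Fintype m] [Fintype k]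
    (A : m → k → ℚ) (b : m → ℚ) (x : k → ℝ)
    (hx : ∀ i, ∑ j, (A i j : ℝ) * x j = (b i : ℝ)) :
    ∃ y : k → ℚ, ∀ i, ∑ j, A i j * y j = b i := by
  classical
  by_contra hcon
  push_neg at hcon
  set L : (k → ℚ) →ₗ[ℚ] (m → ℚ) := Matrix.mulVecLin (Matrix.of A) with hL
  have hLapp : ∀ (y : k → ℚ) (i : m), L y i = ∑ j, A i j * y j := by
    intro y i
    simp [hL, Matrix.mulVecLin_apply, Matrix.mulVec, dotProduct]
  have hb : b ∉ LinearMap.range L := by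
    rintro ⟨y, hy⟩
    obtain ⟨i, hi⟩ := hcon y
    exact hi (by rw [← hLapp y i, hy])
  set R := LinearMap.range L with hR
  have hπb : R.mkQ b ≠ 0 := by
    simpa [Submodule.mkQ_apply, Submodule.Quotient.mk_eq_zero] using hb
  obtain ⟨φ, hφ⟩ : ∃ φ : Module.Dual ℚ ((m → ℚ) ⧸ R), φ (R.mkQ b) ≠ 0 := by
    by_contra hall
    push_neg at hall
    exact hπb ((Module.forall_dual_apply_eq_zero_iff ℚ _).mp hall)
  set ψ : (m → ℚ) →ₗ[ℚ] ℚ := φ ∘ₗ R.mkQ with hψdef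
  have hψR : ∀ v ∈ R, ψ v = 0 := by
    intro v hv
    have : R.mkQ v = 0 := by simpa [Submodule.Quotient.mk_eq_zero] using hv
    simp [hψdef, this]
  set c : m → ℚ := fun i => ψ (Pi.single i 1) with hc
  have hψ : ∀ v : m → ℚ, ψ v = ∑ i, v i * c i := by
    intro v
    have hv : v = ∑ i, v i • (Pi.single i (1 : ℚ) : m → ℚ) := by
      funext j
      simp [Pi.single_apply, Finset.sum_apply]
    conv_lhs => rw [hv]
    simp [map_sum, map_smul, smul_eq_mul, hc]
  have hcol : ∀ j, ∑ i, A i j * c i = 0 := by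
    intro j
    have hmem : (fun i => A i j) ∈ R := by
      refine ⟨Pi.single j 1, ?_⟩
      funext i
      rw [hLapp]
      simp [Pi.single_apply]
    have := hψR _ hmem
    rw [hψ] at this
    exact this
  have hS : ∑ i, (c i : ℝ) * (b i : ℝ) = 0 := by
    have h1 : ∀ i, (c i : ℝ) * (b i : ℝ) = ∑ j, (c i : ℝ) * ((A i j : ℝ) * x j) := by
      intro i
      rw [← Finset.mul_sum, hx i]
    calc ∑ i, (c i : ℝ) * (b i : ℝ) = ∑ i, ∑ j, (c i : ℝ) * ((A i j : ℝ) * x j) := by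
          exact Finset.sum_congr rfl fun i _ => h1 i
      _ = ∑ j, (∑ i, (A i j : ℝ) * (c i : ℝ)) * x j := by
          rw [Finset.sum_comm]
          exact Finset.sum_congr rfl fun j _ => by rw [Finset.sum_mul]; exact Finset.sum_congr rfl fun i _ => by ring
      _ = 0 := by
          refine Finset.sum_eq_zero fun j _ => ?_
          have : (∑ i, (A i j : ℝ) * (c i : ℝ)) = ((∑ i, A i j * c i : ℚ) : ℝ) := by push_cast; rfl
          rw [this, hcol j]
          simp
  have hψb : ψ b ≠ 0 := hφ
  rw [hψ] at hψb
  apply hψb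
  have : ((∑ i, b i * c i : ℚ) : ℝ) = 0 := by
    push_cast
    rw [← hS]
    exact Finset.sum_congr rfl fun i _ => by ring
  exact_mod_cast this

/-- Kempf rationality: let `M` be a full-rank lattice in a finite-dimensional real
inner product space on which the inner product is integer-valued, `σ` a rational
polyhedral cone (cut out by functionals integral on `M`), and `f` a linear functional
integral on `M` taking a negative value on `σ`. If `f` attains its minimum on the
unit sphere intersected with `σ` at `s`, then the ray `ℝ_{>0}·s` contains a nonzero
lattice point, and a unique indivisible one. -/
theorem ray_of_min_contains_unique_indivisible_lattice_point
    {V : Type*} [NormedAddCommGroup V] [InnerProductSpace ℝ V] [FiniteDimensional ℝ V]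
    (M : AddSubgroup V) (hspan : Submodule.span ℝ (M : Set V) = ⊤)
    (hint : ∀ x ∈ M, ∀ y ∈ M, ∃ k : ℤ, ⟪x, y⟫ = (k : ℝ))
    {ι : Type*} [Fintype ι] (g : ι → V →L[ℝ] ℝ)
    (hgint : ∀ i, ∀ x ∈ M, ∃ k : ℤ, g i x = (k : ℝ))
    (σ : Set V) (hσ : σ = {v | ∀ i, 0 ≤ g i v})
    (f : V →L[ℝ] ℝ) (hfint : ∀ x ∈ M, ∃ k : ℤ, f x = (k : ℝ))
    (hneg : ∃ x ∈ σ, f x < 0)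
    (s : V) (hsσ : s ∈ σ) (hnorm : ‖s‖ = 1)
    (hmin : ∀ y ∈ σ, ‖y‖ = 1 → f s ≤ f y) :
    (∃ p ∈ M, p ≠ 0 ∧ ∃ c : ℝ, 0 < c ∧ p = c • s) ∧
      (∃! p : V, p ∈ M ∧ p ≠ 0 ∧ (∃ c : ℝ, 0 < c ∧ p = c • s) ∧
        ∀ (N : ℕ) (q : V), q ∈ M → p = (N : ℤ) • q → N = 1) := by
  classical
  have hs0 : s ≠ 0 := by
    intro h; rw [h] at hnorm; simp at hnorm
  -- f s < 0
  have hfs : f s < 0 := by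
    obtain ⟨x0, hx0σ, hfx0⟩ := hneg
    have hx0 : x0 ≠ 0 := by
      intro h; rw [h] at hfx0; simp at hfx0
    have hnx0 : (0:ℝ) < ‖x0‖ := norm_pos_iff.mpr hx0
    have huσ : (‖x0‖⁻¹ • x0) ∈ σ := by
      rw [hσ] at hx0σ ⊢
      intro i
      rw [map_smul, smul_eq_mul]
      exact mul_nonneg (inv_nonneg.mpr hnx0.le) (hx0σ i)
    have hun : ‖(‖x0‖⁻¹ • x0)‖ = 1 := norm_smul_inv_norm hx0
    have := hmin _ huσ hun
    have hfu : f (‖x0‖⁻¹ • x0) < 0 := by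
      rw [map_smul, smul_eq_mul]
      exact mul_neg_of_pos_of_neg (inv_pos.mpr hnx0) hfx0
    exact lt_of_le_of_lt this hfu
  obtain ⟨c₀, hc₀def⟩ : ∃ c : ℝ, c = (-(f s))⁻¹ := ⟨_, rfl⟩
  have hc₀ : 0 < c₀ := by rw [hc₀def]; exact inv_pos.mpr (by linarith)
  obtain ⟨v₀, hv₀def⟩ : ∃ v : V, v = c₀ • s := ⟨_, rfl⟩
  have hfv₀ : f v₀ = -1 := by
    rw [hv₀def, map_smul, smul_eq_mul, hc₀def]
    field_simp
    rw [div_self hfs.ne]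
  have hgv₀ : ∀ i, 0 ≤ g i v₀ := by
    rw [hσ] at hsσ
    intro i
    rw [hv₀def, map_smul, smul_eq_mul]
    exact mul_nonneg hc₀.le (hsσ i)
  have hnv₀ : ‖v₀‖ = c₀ := by
    rw [hv₀def, norm_smul, hnorm, Real.norm_eq_abs, abs_of_pos hc₀, mul_one]
  -- minimality restated
  have hminQ : ∀ v : V, (∀ i, 0 ≤ g i v) → f v = -1 → ‖v₀‖ ≤ ‖v‖ := by
    intro v hgv hfv
    have hv0 : v ≠ 0 := by
      intro h; rw [h] at hfv; simp at hfv
    have hnv : (0:ℝ) < ‖v‖ := norm_pos_iff.mpr hv0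
    have huσ : (‖v‖⁻¹ • v) ∈ σ := by
      rw [hσ]
      intro i
      rw [map_smul, smul_eq_mul]
      exact mul_nonneg (inv_nonneg.mpr hnv.le) (hgv i)
    have hun : ‖(‖v‖⁻¹ • v)‖ = 1 := norm_smul_inv_norm hv0
    have h1 := hmin _ huσ hun
    rw [map_smul, smul_eq_mul, hfv] at h1
    -- f s ≤ ‖v‖⁻¹ * (-1)
    have h2 : ‖v‖⁻¹ ≤ -(f s) := by linarith
    rw [hnv₀, hc₀def]
    calc (-(f s))⁻¹ ≤ (‖v‖⁻¹)⁻¹ := by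
          apply inv_anti₀ (inv_pos.mpr hnv) h2
      _ = ‖v‖ := inv_inv _
  -- perpendicularity
  have hperp : ∀ w : V, f w = 0 → (∀ i, g i v₀ = 0 → g i w = 0) → ⟪v₀, w⟫ = 0 := by
    intro w hfw hgw
    have hev : ∀ᶠ t : ℝ in nhds 0, ∀ i, 0 ≤ g i (v₀ + t • w) := by
      rw [Filter.eventually_all]
      intro i
      rcases eq_or_lt_of_le (hgv₀ i) with h0 | hpos
      · filter_upwards with t
        rw [map_add, map_smul, smul_eq_mul, ← h0, hgw i h0.symm]
        simp
      · have hcont : Continuous fun t : ℝ => g i (v₀ + t • w) := by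
          exact (g i).continuous.comp (continuous_const.add (continuous_id.smul continuous_const))
        have htend : Filter.Tendsto (fun t : ℝ => g i (v₀ + t • w)) (nhds 0) (nhds (g i v₀)) := by
          have := hcont.tendsto 0
          simpa using this
        filter_upwards [htend.eventually_const_lt hpos] with t ht using ht.le
    have hlocal : IsLocalMin (fun t : ℝ => ‖v₀ + t • w‖ ^ 2) 0 := by
      filter_upwards [hev] with t ht
      have hf1 : f (v₀ + t • w) = -1 := by
        rw [map_add, map_smul, smul_eq_mul, hfv₀, hfw]; ring
      have h2 := hminQ _ ht hf1
      have h3 : ‖v₀‖ ^ 2 ≤ ‖v₀ + t • w‖ ^ 2 :=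
        pow_le_pow_left₀ (norm_nonneg _) h2 2
      simpa using h3
    have hderiv : HasDerivAt (fun t : ℝ => ‖v₀ + t • w‖ ^ 2) (2 * ⟪v₀, w⟫) 0 := by
      have heq : (fun t : ℝ => ‖v₀ + t • w‖ ^ 2)
          = fun t : ℝ => ‖v₀‖ ^ 2 + 2 * ⟪v₀, w⟫ * t + ‖w‖ ^ 2 * t ^ 2 := by
        funext t
        rw [norm_add_sq_real, real_inner_smul_right, norm_smul, Real.norm_eq_abs,
          mul_pow, sq_abs]
        ring
      rw [heq]
      have h1 : HasDerivAt (fun t : ℝ => ‖v₀‖ ^ 2 + 2 * ⟪v₀, w⟫ * t) (2 * ⟪v₀, w⟫) 0 := by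
        simpa using (((hasDerivAt_id (0:ℝ)).const_mul (2 * ⟪v₀, w⟫)).const_add (‖v₀‖ ^ 2))
      have h2 : HasDerivAt (fun t : ℝ => ‖w‖ ^ 2 * t ^ 2) 0 0 := by
        simpa using ((hasDerivAt_pow 2 (0:ℝ)).const_mul (‖w‖ ^ 2))
      have h3 := h1.add h2
      rw [add_zero] at h3
      exact h3
    have := hlocal.hasDerivAt_eq_zero hderiv
    linarith
  -- choose a basis of V inside M
  obtain ⟨bs, hbsM, hbspan, hbli⟩ := exists_linearIndependent ℝ (M : Set V)
  have hfin : bs.Finite := hbli.setFinite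
  haveI : Fintype bs := hfin.fintype
  have hBtop : ⊤ ≤ Submodule.span ℝ (Set.range ((↑) : bs → V)) := by
    rw [Subtype.range_coe, hbspan, hspan]
  let B : Module.Basis bs ℝ V := Module.Basis.mk hbli hBtop
  have hB : ∀ j : bs, B j = (j : V) := fun j => Module.Basis.mk_apply hbli hBtop j
  have hBM : ∀ j : bs, B j ∈ M := fun j => by rw [hB]; exact hbsM j.2
  -- the row index type
  let κ := Option {i : ι // g i v₀ = 0}
  haveI : Fintype κ := by infer_instance
  let F : κ → V →L[ℝ] ℝ := fun r => Option.elim r f fun i => g i.1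
  let bval : κ → ℚ := fun r => Option.elim r (-1) fun _ => 0
  have hFv₀ : ∀ r, F r v₀ = (bval r : ℝ) := by
    rintro (_ | ⟨i, hi⟩)
    · simpa [F, bval] using hfv₀
    · simpa [F, bval] using hi
  -- rational matrices
  have hA : ∀ (r : κ) (j : bs), ∃ q : ℤ, F r (B j) = (q : ℝ) := by
    rintro (_ | ⟨i, hi⟩) j
    · exact hfint _ (hBM j)
    · exact hgint i _ (hBM j)
  have hG : ∀ j j' : bs, ∃ q : ℤ, ⟪B j, B j'⟫ = (q : ℝ) := fun j j' =>
    hint _ (hBM j) _ (hBM j')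
  let Aq : κ → bs → ℚ := fun r j => ((hA r j).choose : ℚ)
  have hAq : ∀ r j, ((Aq r j : ℝ)) = F r (B j) := by
    intro r j
    simp only [Aq, Rat.cast_intCast]
    exact ((hA r j).choose_spec).symm
  let Gq : bs → bs → ℚ := fun j j' => ((hG j j').choose : ℚ)
  have hGq : ∀ j j', ((Gq j j' : ℝ)) = ⟪B j, B j'⟫ := by
    intro j j'
    simp only [Gq, Rat.cast_intCast]
    exact ((hG j j').choose_spec).symm
  -- real solution: coordinates of v₀ and dual coefficients
  let x : bs → ℝ := fun j => B.repr v₀ j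
  have hsum : ∑ j, x j • B j = v₀ := B.sum_repr v₀
  have hFsum : ∀ (r : κ) (u : bs → ℝ), F r (∑ j, u j • B j) = ∑ j, u j * F r (B j) := by
    intro r u
    rw [map_sum]
    exact Finset.sum_congr rfl fun j _ => by rw [map_smul, smul_eq_mul]
  -- dual: inner with v₀ is a combination of the F r
  obtain ⟨z, hz⟩ : ∃ z : κ → ℝ, ∀ w : V, ∑ r, z r * F r w = ⟪v₀, w⟫ := by
    have hker : ⨅ r : κ, LinearMap.ker (F r : V →ₗ[ℝ] ℝ)
        ≤ LinearMap.ker ((innerSL ℝ v₀ : V →L[ℝ] ℝ) : V →ₗ[ℝ] ℝ) := by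
      intro w hw
      simp only [Submodule.mem_iInf, LinearMap.mem_ker] at hw
      have hfw : f w = 0 := hw none
      have hgw : ∀ i, g i v₀ = 0 → g i w = 0 := fun i hi => hw (some ⟨i, hi⟩)
      simpa using hperp w hfw hgw
    have hmem := mem_span_of_iInf_ker_le_ker hker
    rw [Submodule.mem_span_range_iff_exists_fun] at hmem
    obtain ⟨z, hz⟩ := hmem
    refine ⟨z, fun w => ?_⟩
    have := LinearMap.congr_fun hz w
    simpa [LinearMap.sum_apply, LinearMap.smul_apply, smul_eq_mul] using this
  have hBv₀ : ∀ j, ⟪B j, v₀⟫ = ∑ r, z r * F r (B j) := by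
    intro j
    rw [real_inner_comm]
    exact (hz (B j)).symm
  -- the big rational linear system
  let BigA : (κ ⊕ bs) → (bs ⊕ κ) → ℚ := fun row col =>
    Sum.elim (fun r => Sum.elim (fun j => Aq r j) (fun _ => 0) col)
      (fun j => Sum.elim (fun j' => Gq j j') (fun r => -(Aq r j)) col) row
  let bb : (κ ⊕ bs) → ℚ := Sum.elim bval fun _ => 0
  let X : (bs ⊕ κ) → ℝ := Sum.elim x z
  have hreal : ∀ row, ∑ col, ((BigA row col : ℝ)) * X col = ((bb row : ℝ)) := by
    rintro (r | j)
    · rw [Fintype.sum_sum_type]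
      simp only [BigA, X, bb, Sum.elim_inl, Sum.elim_inr, Rat.cast_zero, zero_mul,
        Finset.sum_const_zero, add_zero]
      have : ∑ j, ((Aq r j : ℝ)) * x j = F r v₀ := by
        rw [← hsum, hFsum]
        exact Finset.sum_congr rfl fun j _ => by rw [hAq, mul_comm]
      rw [this, hFv₀ r]
    · rw [Fintype.sum_sum_type]
      simp only [BigA, X, bb, Sum.elim_inl, Sum.elim_inr]
      have h1 : ∑ j', ((Gq j j' : ℝ)) * x j' = ⟪B j, v₀⟫ := by
        conv_rhs => rw [← hsum]
        rw [inner_sum]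
        exact Finset.sum_congr rfl fun j' _ => by
          rw [real_inner_smul_right, hGq, mul_comm]
      have h2 : ∑ r, ((-(Aq r j) : ℚ) : ℝ) * z r = -∑ r, z r * F r (B j) := by
        rw [← Finset.sum_neg_distrib]
        exact Finset.sum_congr rfl fun r _ => by push_cast; rw [hAq]; ring
      rw [h1, h2, hBv₀ j]
      push_cast
      ring
  -- rational solution
  obtain ⟨y, hy⟩ := ratSolvable' BigA bb X hreal
  let yq : bs → ℚ := fun j => y (Sum.inl j)
  let wq : κ → ℝ := fun r => ((y (Sum.inr r) : ℝ))
  let v₁ : V := ∑ j, ((yq j : ℝ)) • B j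
  have hyrow1 : ∀ r : κ, ∑ j, Aq r j * yq j = bval r := by
    intro r
    have := hy (Sum.inl r)
    rw [Fintype.sum_sum_type] at this
    simpa [BigA, bb, yq] using this
  have hyrow2 : ∀ j : bs, ∑ j', Gq j j' * yq j' = ∑ r, Aq r j * y (Sum.inr r) := by
    intro j
    have := hy (Sum.inr j)
    rw [Fintype.sum_sum_type] at this
    simp only [BigA, bb, Sum.elim_inl, Sum.elim_inr, neg_mul] at this
    rw [Finset.sum_neg_distrib] at this
    linarith [this]
  have hFv₁ : ∀ r, F r v₁ = (bval r : ℝ) := by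
    intro r
    rw [hFsum]
    have : ∑ j, ((yq j : ℝ)) * F r (B j) = ((∑ j, Aq r j * yq j : ℚ) : ℝ) := by
      push_cast
      exact Finset.sum_congr rfl fun j _ => by rw [← hAq]; ring
    rw [this, hyrow1 r]
  have hBv₁ : ∀ j, ⟪B j, v₁⟫ = ∑ r, wq r * F r (B j) := by
    intro j
    have hl : ⟪B j, v₁⟫ = ∑ j', ((yq j' : ℝ)) * ⟪B j, B j'⟫ := by
      rw [inner_sum]
      exact Finset.sum_congr rfl fun j' _ => by rw [real_inner_smul_right]
    rw [hl]
    have : ∑ j', ((yq j' : ℝ)) * ⟪B j, B j'⟫ = ((∑ j', Gq j j' * yq j' : ℚ) : ℝ) := by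
      push_cast
      exact Finset.sum_congr rfl fun j' _ => by rw [← hGq]; ring
    rw [this, hyrow2 j]
    push_cast
    refine Finset.sum_congr rfl fun r _ => ?_
    rw [hAq]
    simp only [wq]
    ring
  -- v₁ = v₀
  have hBd : ∀ j, ⟪B j, v₀ - v₁⟫ = ∑ r, (z r - wq r) * F r (B j) := by
    intro j
    rw [inner_sub_right, hBv₀ j, hBv₁ j, ← Finset.sum_sub_distrib]
    exact Finset.sum_congr rfl fun r _ => by ring
  have hud : ∀ u : bs → ℝ, ⟪∑ j, u j • B j, v₀ - v₁⟫
      = ∑ r, (z r - wq r) * (∑ j, u j * F r (B j)) := by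
    intro u
    rw [sum_inner]
    have h1 : ∀ j, ⟪u j • B j, v₀ - v₁⟫ = ∑ r, u j * ((z r - wq r) * F r (B j)) := by
      intro j
      rw [real_inner_smul_left, hBd j, Finset.mul_sum]
    calc ∑ j, ⟪u j • B j, v₀ - v₁⟫
        = ∑ j, ∑ r, u j * ((z r - wq r) * F r (B j)) :=
          Finset.sum_congr rfl fun j _ => h1 j
      _ = ∑ r, ∑ j, u j * ((z r - wq r) * F r (B j)) := Finset.sum_comm
      _ = ∑ r, (z r - wq r) * (∑ j, u j * F r (B j)) := by
          refine Finset.sum_congr rfl fun r _ => ?_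
          rw [Finset.mul_sum]
          exact Finset.sum_congr rfl fun j _ => by ring
  have hv₀d : ⟪v₀, v₀ - v₁⟫ = ∑ r, (z r - wq r) * ((bval r : ℝ)) := by
    nth_rewrite 1 [← hsum]
    rw [hud x]
    refine Finset.sum_congr rfl fun r _ => ?_
    rw [← hFsum r x, hsum, hFv₀ r]
  have hv₁d : ⟪v₁, v₀ - v₁⟫ = ∑ r, (z r - wq r) * ((bval r : ℝ)) := by
    rw [hud (fun j => ((yq j : ℝ)))]
    refine Finset.sum_congr rfl fun r _ => ?_
    rw [← hFsum r, hFv₁ r]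
  have hdd : v₀ = v₁ := by
    have h0 : ⟪v₀ - v₁, v₀ - v₁⟫ = 0 := by
      rw [inner_sub_left, hv₀d, hv₁d, sub_self]
    rw [inner_self_eq_zero] at h0
    exact sub_eq_zero.mp h0
  -- clear denominators
  let D : ℕ := ∏ j, (yq j).den
  have hD : 0 < D := Finset.prod_pos fun j _ => (yq j).pos
  have hDj : ∀ j : bs, ∃ m : ℤ, ((D : ℚ)) * yq j = (m : ℚ) := by
    intro j
    obtain ⟨t, ht⟩ := Finset.dvd_prod_of_mem (fun j => (yq j).den) (Finset.mem_univ j)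
    refine ⟨(yq j).num * t, ?_⟩
    have : ((D : ℚ)) = ((yq j).den : ℚ) * (t : ℚ) := by
      rw [show D = (yq j).den * t from ht]; push_cast; ring
    rw [this]
    rw [mul_comm ((yq j).den : ℚ) (t : ℚ), mul_assoc]
    rw [Rat.den_mul_eq_num]
    push_cast
    ring
  have hDv₀ : (D : ℝ) • v₀ ∈ M := by
    rw [hdd]
    have : (D : ℝ) • v₁ = ∑ j, ((D : ℝ) * ((yq j : ℝ))) • B j := by
      rw [Finset.smul_sum]
      exact Finset.sum_congr rfl fun j _ => by rw [smul_smul]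
    rw [this]
    refine AddSubgroup.sum_mem M fun j _ => ?_
    obtain ⟨m, hm⟩ := hDj j
    have hcast : ((D : ℝ)) * ((yq j : ℝ)) = ((m : ℝ)) := by
      have := congrArg (fun q : ℚ => (q : ℝ)) hm
      push_cast at this ⊢
      exact this
    rw [hcast, Int.cast_smul_eq_zsmul]
    exact AddSubgroup.zsmul_mem M (hBM j) m
  have Ex : ∃ p ∈ M, p ≠ 0 ∧ ∃ c : ℝ, 0 < c ∧ p = c • s := by
    refine ⟨(D : ℝ) • v₀, hDv₀, ?_, (D : ℝ) * c₀, by positivity, ?_⟩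
    · have : ((D : ℝ)) * c₀ ≠ 0 := by positivity
      rw [hv₀def, smul_smul]
      exact smul_ne_zero this hs0
    · rw [hv₀def, smul_smul]
  refine ⟨Ex, ?_⟩
  -- the subgroup of scalars c with c • s ∈ M
  let G : AddSubgroup ℝ :=
    { carrier := {c : ℝ | c • s ∈ M}
      add_mem' := by
        intro a b ha hb
        simpa [add_smul] using AddSubgroup.add_mem M ha hb
      zero_mem' := by simp [AddSubgroup.zero_mem]
      neg_mem' := by
        intro a ha
        simpa [neg_smul] using AddSubgroup.neg_mem M ha }
  have hGmem : ∀ c : ℝ, c ∈ G ↔ c • s ∈ M := fun c => Iff.rfl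
  have hGgap : ∀ c : ℝ, c ∈ G → c ≠ 0 → 1 ≤ |c| := by
    intro c hc hc0
    obtain ⟨k, hk⟩ := hint _ ((hGmem c).mp hc) _ ((hGmem c).mp hc)
    have hkval : ⟪c • s, c • s⟫ = c ^ 2 := by
      rw [real_inner_smul_left, real_inner_smul_right, real_inner_self_eq_norm_sq, hnorm]
      ring
    have hc2 : (k : ℝ) = c ^ 2 := by rw [← hk, hkval]
    have hcpos : (0:ℝ) < c ^ 2 := by positivity
    have hk1 : (1:ℤ) ≤ k := by
      by_contra hlt
      push_neg at hlt
      have hk0 : k ≤ 0 := by omega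
      have : (k:ℝ) ≤ 0 := by exact_mod_cast hk0
      linarith
    have : (1:ℝ) ≤ c ^ 2 := by
      have : (1:ℝ) ≤ (k:ℝ) := by exact_mod_cast hk1
      linarith
    nlinarith [abs_nonneg c, sq_abs c]
  obtain ⟨cE, hcEpos, pE, hpEM, hpEne, hpEeq⟩ :
      ∃ cE : ℝ, 0 < cE ∧ ∃ pE, pE ∈ M ∧ pE ≠ 0 ∧ pE = cE • s := by
    obtain ⟨p, hpM, hpne, c, hc, hpc⟩ := Ex
    exact ⟨c, hc, p, hpM, hpne, hpc⟩
  have hcEG : cE ∈ G := by rw [hGmem, ← hpEeq]; exact hpEM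
  -- G is cyclic
  obtain ⟨a, hGa⟩ : ∃ a : ℝ, G = AddSubgroup.closure {a} := by
    rcases G.dense_or_cyclic with hdense | hcyc
    · exfalso
      obtain ⟨y, hy⟩ := Metric.dense_iff.mp hdense (1/2 : ℝ) (1/2) (by norm_num)
      obtain ⟨hyball, hyG⟩ := hy
      rw [Metric.mem_ball, Real.dist_eq] at hyball
      have hy0 : (0:ℝ) < y := by rcases abs_lt.mp hyball with ⟨h1, h2⟩; linarith
      have hy1 : y < 1 := by rcases abs_lt.mp hyball with ⟨h1, h2⟩; linarith
      have := hGgap y hyG (by linarith)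
      rw [abs_of_pos hy0] at this
      linarith
    · exact hcyc
  have hmemG : ∀ c : ℝ, c ∈ G ↔ ∃ n : ℤ, n • a = c := by
    intro c
    rw [hGa, AddSubgroup.mem_closure_singleton]
  have ha0 : a ≠ 0 := by
    intro h
    obtain ⟨n, hn⟩ := (hmemG cE).mp hcEG
    rw [h] at hn
    simp at hn
    linarith
  have ha'pos : 0 < |a| := abs_pos.mpr ha0
  have ha'G : |a| ∈ G := by
    rcases abs_cases a with ⟨h1, _⟩ | ⟨h1, _⟩
    · rw [h1]
      exact (hmemG a).mpr ⟨1, one_smul _ _⟩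
    · rw [h1]
      exact AddSubgroup.neg_mem G ((hmemG a).mpr ⟨1, one_smul _ _⟩)
  have hchar : ∀ c : ℝ, c ∈ G → ∃ n : ℤ, c = n * |a| := by
    intro c hc
    obtain ⟨n, hn⟩ := (hmemG c).mp hc
    rcases abs_cases a with ⟨h1, _⟩ | ⟨h1, _⟩
    · refine ⟨n, ?_⟩
      rw [h1, ← hn]
      simp [zsmul_eq_mul]
    · refine ⟨-n, ?_⟩
      rw [h1, ← hn]
      push_cast
      rw [zsmul_eq_mul]
      ring
  -- the indivisible point
  refine ⟨|a| • s, ⟨ha'G, smul_ne_zero ha'pos.ne' hs0, ⟨|a|, ha'pos, rfl⟩, ?_⟩, ?_⟩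
  · -- indivisibility
    intro N q hqM hNq
    rcases Nat.eq_zero_or_pos N with h0 | hNpos
    · exfalso
      rw [h0] at hNq
      have hz : |a| • s = 0 := by rw [hNq]; simp
      exact smul_ne_zero ha'pos.ne' hs0 hz
    have hNne : ((N:ℝ)) ≠ 0 := by positivity
    have hq : q = ((|a| / N)) • s := by
      have h1 : |a| • s = ((N:ℝ)) • q := by
        rw [hNq, ← Int.cast_smul_eq_zsmul ℝ (N:ℤ) q]
        norm_num
      have h2 : ((N:ℝ))⁻¹ • (|a| • s) = q := by
        rw [h1, smul_smul, inv_mul_cancel₀ hNne, one_smul]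
      rw [← h2, smul_smul]
      congr 1
      field_simp
    have hgq : |a| / N ∈ G := by
      rw [hGmem, ← hq]
      exact hqM
    obtain ⟨n, hn⟩ := hchar _ hgq
    have hna : (n : ℝ) * ((N:ℝ)) = 1 := by
      have h3 : |a| = ((n : ℝ)) * |a| * N := by
        field_simp at hn ⊢
        linarith [hn]
      have h4 : ((n : ℝ)) * N * |a| = 1 * |a| := by linarith [h3]
      have := mul_right_cancel₀ ha'pos.ne' h4
      linarith
    have hint1 : (n * (N:ℤ) : ℤ) = 1 := by
      have : ((n * (N:ℤ) : ℤ) : ℝ) = 1 := by push_cast; linarith [hna]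
      exact_mod_cast this
    have hdvd : ((N:ℤ)) ∣ 1 := Dvd.intro_left n hint1
    have : (N:ℤ) = 1 ∨ (N:ℤ) = -1 := Int.isUnit_iff.mp (isUnit_of_dvd_one hdvd)
    rcases this with h | h
    · exact_mod_cast h
    · exfalso; omega
  · -- uniqueness
    rintro p' ⟨hp'M, hp'ne, ⟨c, hcpos, rfl⟩, hp'ind⟩
    have hcG : c ∈ G := (hGmem c).mpr hp'M
    obtain ⟨n, hn⟩ := hchar _ hcG
    have hnpos : 0 < n := by
      by_contra hle
      push_neg at hle
      have hnr : ((n:ℝ)) ≤ 0 := by exact_mod_cast hle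
      have hc0 : c ≤ 0 := by
        rw [hn]
        exact mul_nonpos_of_nonpos_of_nonneg hnr (abs_nonneg a)
      linarith
    have hNn : ((n.toNat : ℤ)) = n := Int.toNat_of_nonneg hnpos.le
    have heq : c • s = ((n.toNat : ℤ)) • (|a| • s) := by
      rw [hNn, ← Int.cast_smul_eq_zsmul ℝ n (|a| • s), smul_smul, hn]
    have h1 := hp'ind n.toNat (|a| • s) ha'G heq
    have hn1 : n = 1 := by omega
    rw [hn, hn1]
    norm_num
end

section
/- Let G be a diagonalizable group acting diagonally on 𝔸ⁿ via characters χ₁,…,χₙ, and fix a norm ‖·‖ on 𝚪(G)_ℝ induced by an integer-valued inner product on 𝚪(G). Let χ be a character and x an unstable point, i.e., there is λ in the cone σ_x with ⟨χ, λ⟩ < 0. Then M^χ(x) := inf over nonzero λ ∈ σ_x of ⟨χ, λ⟩/‖λ‖ is finite, is negative, and is attained at a unique ray of σ_x, hence at a unique indivisible one-parameter subgroup. -/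
open RealInnerProductSpace

open Matrix in
private lemma rat_proj_solvable' {m : Type*} [Fintype m] [DecidableEq m] {r : ℕ}
    (A : Matrix m (Fin r) ℚ) (x : Fin r → ℚ) :
    ∃ y : m → ℚ, (A * Aᵀ) *ᵥ y = A *ᵥ x := by
  have hker : LinearMap.ker (A * Aᵀ).mulVecLin = LinearMap.ker Aᵀ.mulVecLin := by
    apply le_antisymm
    · intro y hy
      simp only [LinearMap.mem_ker, Matrix.mulVecLin_apply] at hy ⊢
      have h0 : (Aᵀ *ᵥ y) ⬝ᵥ (Aᵀ *ᵥ y) = 0 := by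
        rw [Matrix.dotProduct_mulVec, Matrix.vecMul_transpose, Matrix.mulVec_mulVec, hy,
          zero_dotProduct]
      exact (dotProduct_self_eq_zero (v := Aᵀ *ᵥ y)).mp h0
    · intro y hy
      simp only [LinearMap.mem_ker, Matrix.mulVecLin_apply] at hy ⊢
      rw [← Matrix.mulVec_mulVec, hy, Matrix.mulVec_zero]
  have hle : LinearMap.range (A * Aᵀ).mulVecLin ≤ LinearMap.range A.mulVecLin := by
    rintro _ ⟨y, rfl⟩
    exact ⟨Aᵀ *ᵥ y, by simp only [Matrix.mulVecLin_apply, Matrix.mulVec_mulVec]⟩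
  have hrk : Module.finrank ℚ (LinearMap.range A.mulVecLin)
      ≤ Module.finrank ℚ (LinearMap.range (A * Aᵀ).mulVecLin) := by
    have h1 := LinearMap.finrank_range_add_finrank_ker (A * Aᵀ).mulVecLin
    have h2 := LinearMap.finrank_range_add_finrank_ker Aᵀ.mulVecLin
    rw [hker] at h1
    have h3 : Module.finrank ℚ (LinearMap.range (A * Aᵀ).mulVecLin)
        = Module.finrank ℚ (LinearMap.range Aᵀ.mulVecLin) := by omega
    rw [h3]
    have h4 : A.rank = Aᵀ.rank := (Matrix.rank_transpose A).symm
    simpa [Matrix.rank] using h4.le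
  have heq := Submodule.eq_of_le_of_finrank_le hle hrk
  have hmem : A *ᵥ x ∈ LinearMap.range (A * Aᵀ).mulVecLin := by
    rw [heq]; exact ⟨x, rfl⟩
  obtain ⟨y, hy⟩ := hmem
  exact ⟨y, hy⟩

set_option maxHeartbeats 3200000 in
/-- Kempf's theorem, abstract form: let `σ ⊆ ℝʳ` be a rational polyhedral cone (cut
out by integer functionals) and `f = ⟨c, -⟩` an integral linear functional taking a
negative value on `σ`.  Then the infimum of `f(v)/‖v‖` over nonzero `v ∈ σ` is
negative and attained, on a unique ray which contains a unique indivisible lattice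
point. -/
theorem exists_unique_indivisible_adapted (r : ℕ) {ι : Type*} [Fintype ι]
    (g : ι → Fin r → ℤ) (σ : Set (EuclideanSpace ℝ (Fin r)))
    (hσ : σ = {v | ∀ i, 0 ≤ ∑ j, (g i j : ℝ) * v j})
    (c : Fin r → ℤ)
    (hneg : ∃ v ∈ σ, ∑ j, (c j : ℝ) * v j < 0) :
    ∃! s : EuclideanSpace ℝ (Fin r),
      s ∈ σ ∧ s ≠ 0 ∧ (∀ j, ∃ k : ℤ, s j = (k : ℝ)) ∧
      (∀ (N : ℕ) (q : EuclideanSpace ℝ (Fin r)),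
          (∀ j, ∃ k : ℤ, q j = (k : ℝ)) → s = (N : ℝ) • q → N = 1) ∧
      (∑ j, (c j : ℝ) * s j) / ‖s‖ < 0 ∧
      (∀ v ∈ σ, v ≠ 0 →
          (∑ j, (c j : ℝ) * s j) / ‖s‖ ≤ (∑ j, (c j : ℝ) * v j) / ‖v‖) ∧
      (∀ v ∈ σ, v ≠ 0 →
          (∑ j, (c j : ℝ) * v j) / ‖v‖ = (∑ j, (c j : ℝ) * s j) / ‖s‖ →
          ∃ t : ℝ, 0 < t ∧ v = t • s) := by
  classical
  set f : EuclideanSpace ℝ (Fin r) → ℝ := fun v => ∑ j, (c j : ℝ) * v j with hfdef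
  -- linear combination expansion
  have hlin : ∀ (a : Fin r → ℝ) (p q : ℝ) (v w : EuclideanSpace ℝ (Fin r)),
      (∑ j, a j * (p • v + q • w) j) = p * (∑ j, a j * v j) + q * (∑ j, a j * w j) := by
    intro a p q v w
    calc (∑ j, a j * (p • v + q • w) j) = ∑ j, (p * (a j * v j) + q * (a j * w j)) := by
          refine Finset.sum_congr rfl fun j _ => ?_
          show a j * (p * v j + q * w j) = _
          ring
      _ = _ := by rw [Finset.sum_add_distrib, ← Finset.mul_sum, ← Finset.mul_sum]
  have hfsmul : ∀ (t : ℝ) (v : EuclideanSpace ℝ (Fin r)), f (t • v) = t * f v := by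
    intro t v
    have := hlin (fun j => (c j : ℝ)) t 0 v v
    simpa [hfdef] using this
  have hfadd : ∀ v w : EuclideanSpace ℝ (Fin r), f (v + w) = f v + f w := by
    intro v w
    have := hlin (fun j => (c j : ℝ)) 1 1 v w
    simpa [hfdef] using this
  have hcone : ∀ v ∈ σ, ∀ t : ℝ, 0 ≤ t → t • v ∈ σ := by
    intro v hv t ht
    rw [hσ] at hv ⊢
    intro i
    have h1 := hv i
    have h2 := hlin (fun j => (g i j : ℝ)) t 0 v v
    simp only [zero_smul, add_zero, zero_mul] at h2
    rw [h2]
    positivity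
  have hadd : ∀ v ∈ σ, ∀ w ∈ σ, v + w ∈ σ := by
    intro v hv w hw
    rw [hσ] at hv hw ⊢
    intro i
    have h2 := hlin (fun j => (g i j : ℝ)) 1 1 v w
    simp only [one_smul, one_mul] at h2
    rw [h2]
    exact add_nonneg (hv i) (hw i)
  have hfcont : ∀ a : Fin r → ℝ, Continuous fun v : EuclideanSpace ℝ (Fin r) => ∑ j, a j * v j := by
    intro a
    exact continuous_finset_sum _ fun j _ =>
      continuous_const.mul (EuclideanSpace.proj j).continuous
  have hσclosed : IsClosed σ := by
    rw [hσ, Set.setOf_forall]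
    exact isClosed_iInter fun i => isClosed_le continuous_const (hfcont _)
  -- a point of the cone on the unit sphere
  obtain ⟨v₀, hv₀σ, hv₀⟩ := hneg
  have hv₀0 : v₀ ≠ 0 := by
    rintro rfl
    simp only [hfdef] at hv₀
    norm_num [show ∀ j, (0 : EuclideanSpace ℝ (Fin r)) j = 0 from fun _ => rfl] at hv₀
  have hv₀n : 0 < ‖v₀‖ := norm_pos_iff.mpr hv₀0
  have hu₀ : ‖v₀‖⁻¹ • v₀ ∈ σ ∩ Metric.sphere 0 1 :=
    ⟨hcone _ hv₀σ _ (by positivity), by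
      rw [mem_sphere_zero_iff_norm]; exact norm_smul_inv_norm hv₀0⟩
  obtain ⟨u, ⟨huσ, husph⟩, humin⟩ :=
    ((isCompact_sphere (0 : EuclideanSpace ℝ (Fin r)) 1).inter_left hσclosed).exists_isMinOn ⟨_, hu₀⟩
      ((hfcont _).continuousOn (s := σ ∩ Metric.sphere 0 1))
  have hunorm : ‖u‖ = 1 := mem_sphere_zero_iff_norm.mp husph
  have hu0 : u ≠ 0 := by
    intro h; rw [h] at hunorm; simp at hunorm
  set m := f u with hm
  have hm_le : ∀ v ∈ σ, v ≠ 0 → m ≤ f v / ‖v‖ := by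
    intro v hv hv0
    have hvn : 0 < ‖v‖ := norm_pos_iff.mpr hv0
    have h1 : m ≤ f (‖v‖⁻¹ • v) :=
      humin ⟨hcone _ hv _ (by positivity), by
        rw [mem_sphere_zero_iff_norm]; exact norm_smul_inv_norm hv0⟩
    rwa [hfsmul, inv_mul_eq_div] at h1
  have hmneg : m < 0 :=
    lt_of_le_of_lt (hm_le v₀ hv₀σ hv₀0) (div_neg_of_neg_of_pos hv₀ hv₀n)
  -- uniqueness of the minimizer on the sphere
  have huniq : ∀ w ∈ σ, ‖w‖ = 1 → f w = m → w = u := by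
    intro w hw hwn hwm
    have hz : u + w ∈ σ := hadd _ huσ _ hw
    have hfz : f (u + w) = m + m := by rw [hfadd, hwm]
    have hz0 : u + w ≠ 0 := by
      intro h
      rw [h] at hfz
      have : f (0 : EuclideanSpace ℝ (Fin r)) = 0 := by
        have := hfsmul 0 (0 : EuclideanSpace ℝ (Fin r)); simpa using this
      rw [this] at hfz
      linarith
    have hzn : 0 < ‖u + w‖ := norm_pos_iff.mpr hz0
    have h2 := hm_le (u + w) hz hz0
    rw [le_div_iff₀ hzn, hfz] at h2
    have h4 : 2 ≤ ‖u + w‖ := by nlinarith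
    have h5 : ‖u + w‖ ^ 2 = ‖u‖ ^ 2 + 2 * ⟪u, w⟫ + ‖w‖ ^ 2 := norm_add_sq_real u w
    rw [hunorm, hwn] at h5
    have h6 : (1 : ℝ) ≤ ⟪u, w⟫ := by nlinarith
    have h7 : ⟪u, w⟫ ≤ 1 := by
      have := real_inner_le_norm u w
      rwa [hunorm, hwn, one_mul] at this
    have h8 : ⟪u, w⟫ = ‖u‖ * ‖w‖ := by rw [hunorm, hwn]; linarith
    have h9 := inner_eq_norm_mul_iff_real.mp h8
    rw [hunorm, hwn, one_smul, one_smul] at h9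
    exact h9.symm
  -- the active set and the rational displacement
  set act : ι → Prop := fun i => (∑ j, (g i j : ℝ) * u j) = 0 with hact
  set A : Matrix {i // act i} (Fin r) ℚ := fun i j => (g i.1 j : ℚ) with hA
  obtain ⟨y, hy⟩ := rat_proj_solvable' A fun j => (c j : ℚ)
  set dQ : Fin r → ℚ := (fun j => (c j : ℚ)) - A.transpose.mulVec y with hdQ
  set d : EuclideanSpace ℝ (Fin r) := (WithLp.equiv 2 (Fin r → ℝ)).symm fun j => ((dQ j : ℚ) : ℝ) with hd
  have hd_apply : ∀ j, d j = (dQ j : ℝ) := fun j => rfl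
  have hdact : ∀ i : {i // act i}, ∑ j, (g i.1 j : ℝ) * d j = 0 := by
    intro i
    have hQ : A.mulVec dQ = 0 := by
      rw [hdQ, Matrix.mulVec_sub, Matrix.mulVec_mulVec, hy, sub_self]
    have h1 : (∑ j, (g i.1 j : ℚ) * dQ j) = 0 := by
      have := congrFun hQ i
      simpa [Matrix.mulVec, dotProduct, hA] using this
    have h2 : ((∑ j, (g i.1 j : ℚ) * dQ j : ℚ) : ℝ) = 0 := by rw [h1]; norm_num
    push_cast at h2
    simpa [hd_apply] using h2
  have hcd : ∀ j, (c j : ℝ) - d j = ∑ i : {i // act i}, (y i : ℝ) * (g i.1 j : ℝ) := by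
    intro j
    have h1 : (c j : ℚ) - dQ j = ∑ i : {i // act i}, (g i.1 j : ℚ) * y i := by
      simp [hdQ, Matrix.mulVec, dotProduct, Matrix.transpose_apply, hA]
      exact Finset.sum_congr rfl fun i _ => rfl
    have h2 := congrArg (fun q : ℚ => (q : ℝ)) h1
    push_cast at h2
    rw [hd_apply, h2]
    exact Finset.sum_congr rfl fun i _ => mul_comm _ _
  -- on the subspace cut out by active constraints, f is given by d
  have hWf : ∀ z : EuclideanSpace ℝ (Fin r), (∀ i : {i // act i}, ∑ j, (g i.1 j : ℝ) * z j = 0) →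
      f z = ∑ j, d j * z j := by
    intro z hz
    have h1 : f z - ∑ j, d j * z j = ∑ j, ((c j : ℝ) - d j) * z j := by
      rw [hfdef]
      simp only [sub_mul]
      rw [Finset.sum_sub_distrib]
    have h2 : (∑ j, ((c j : ℝ) - d j) * z j)
        = ∑ i : {i // act i}, (y i : ℝ) * ∑ j, (g i.1 j : ℝ) * z j := by
      calc (∑ j, ((c j : ℝ) - d j) * z j)
          = ∑ j, ∑ i : {i // act i}, (y i : ℝ) * ((g i.1 j : ℝ) * z j) := by
            refine Finset.sum_congr rfl fun j _ => ?_
            rw [hcd j, Finset.sum_mul]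
            refine Finset.sum_congr rfl fun i _ => by ring
        _ = ∑ i : {i // act i}, ∑ j, (y i : ℝ) * ((g i.1 j : ℝ) * z j) := Finset.sum_comm
        _ = _ := by
            refine Finset.sum_congr rfl fun i _ => ?_
            rw [Finset.mul_sum]
    rw [h2] at h1
    have h3 : (∑ i : {i // act i}, (y i : ℝ) * ∑ j, (g i.1 j : ℝ) * z j) = 0 := by
      refine Finset.sum_eq_zero fun i _ => ?_
      rw [hz i, mul_zero]
    linarith [h1, h3]
  have hu_act : ∀ i : {i // act i}, ∑ j, (g i.1 j : ℝ) * u j = 0 := fun i => i.2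
  have hfu : m = ∑ j, d j * u j := hWf u hu_act
  have hd0 : d ≠ 0 := by
    rintro h
    rw [h] at hfu
    have : (∑ j, (0 : EuclideanSpace ℝ (Fin r)) j * u j) = 0 := by
      refine Finset.sum_eq_zero fun j _ => ?_
      show (0 : ℝ) * u j = 0
      ring
    rw [this] at hfu
    linarith
  have hdn : 0 < ‖d‖ := norm_pos_iff.mpr hd0
  set e : EuclideanSpace ℝ (Fin r) := ‖d‖⁻¹ • (-d) with he
  have hen : ‖e‖ = 1 := by
    rw [he, norm_smul, norm_neg, norm_inv, norm_norm, inv_mul_cancel₀ hdn.ne']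
  have he_act : ∀ i : {i // act i}, ∑ j, (g i.1 j : ℝ) * e j = 0 := by
    intro i
    have h1 : (∑ j, (g i.1 j : ℝ) * e j) = ∑ j, (-‖d‖⁻¹) * ((g i.1 j : ℝ) * d j) := by
      refine Finset.sum_congr rfl fun j _ => ?_
      show (g i.1 j : ℝ) * (‖d‖⁻¹ * -(d j)) = _
      ring
    rw [h1, ← Finset.mul_sum, hdact i, mul_zero]
  have hde : (∑ j, d j * e j) = -‖d‖ := by
    have hdd : (∑ j, d j * d j) = ‖d‖ ^ 2 := by
      rw [← real_inner_self_eq_norm_sq]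
      simp only [PiLp.inner_apply, RCLike.inner_apply, conj_trivial]
    have h1 : (∑ j, d j * e j) = -‖d‖⁻¹ * ∑ j, d j * d j := by
      rw [Finset.mul_sum]
      refine Finset.sum_congr rfl fun j _ => ?_
      show d j * (‖d‖⁻¹ * -(d j)) = _
      ring
    rw [h1, hdd]
    field_simp
  -- the positive inactive constraints stay positive for small t, so u+t(e-u) ∈ σ
  have hev : ∀ᶠ t in nhdsWithin (0:ℝ) (Set.Ioi 0),
      ((1 - t) • u + t • e ∈ σ ∧ t < 1/2 ∧ 0 < t) := by
    have hB : ∀ᶠ t in nhdsWithin (0:ℝ) (Set.Ioi 0), t < 1/2 :=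
      nhdsWithin_le_nhds (gt_mem_nhds (by norm_num))
    have hC : ∀ᶠ t in nhdsWithin (0:ℝ) (Set.Ioi 0), 0 < t :=
      eventually_mem_nhdsWithin
    have hA2 : ∀ᶠ t in nhdsWithin (0:ℝ) (Set.Ioi 0), (1 - t) • u + t • e ∈ σ := by
      rw [hσ]
      simp only [Set.mem_setOf_eq]
      rw [Filter.eventually_all]
      intro i
      have hexp : ∀ t : ℝ, (∑ j, (g i j : ℝ) * ((1 - t) • u + t • e) j)
          = (1 - t) * (∑ j, (g i j : ℝ) * u j) + t * (∑ j, (g i j : ℝ) * e j) :=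
        fun t => hlin _ _ _ _ _
      by_cases hi : act i
      · filter_upwards with t
        rw [hexp t, hu_act ⟨i, hi⟩, he_act ⟨i, hi⟩]
        simp
      · have hpos : 0 < ∑ j, (g i j : ℝ) * u j := by
          rcases lt_or_eq_of_le ((hσ ▸ huσ) i) with h | h
          · exact h
          · exact absurd h.symm hi
        have hcont : Continuous fun t : ℝ =>
            (1 - t) * (∑ j, (g i j : ℝ) * u j) + t * (∑ j, (g i j : ℝ) * e j) := by
          fun_prop
        have htend : Filter.Tendsto (fun t : ℝ =>
            (1 - t) * (∑ j, (g i j : ℝ) * u j) + t * (∑ j, (g i j : ℝ) * e j))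
            (nhdsWithin 0 (Set.Ioi 0)) (nhds (∑ j, (g i j : ℝ) * u j)) := by
          have := hcont.tendsto 0
          simp only [one_mul, sub_zero, zero_mul, add_zero] at this
          exact this.mono_left nhdsWithin_le_nhds
        filter_upwards [htend.eventually_const_lt hpos] with t ht
        rw [hexp t]
        linarith
    filter_upwards [hA2, hB, hC] with t h1 h2 h3
    exact ⟨h1, h2, h3⟩
  obtain ⟨t, hut, ht2, htpos⟩ := hev.exists
  set ut : EuclideanSpace ℝ (Fin r) := (1 - t) • u + t • e with hutdef
  have hutn1 : ‖ut‖ ≤ 1 := by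
    calc ‖ut‖ ≤ ‖(1 - t) • u‖ + ‖t • e‖ := norm_add_le _ _
      _ = |1 - t| * 1 + |t| * 1 := by rw [norm_smul, norm_smul, hunorm, hen]; rfl
      _ = 1 := by rw [abs_of_nonneg (by linarith : (0:ℝ) ≤ 1 - t), abs_of_nonneg htpos.le]; ring
  have hutne : ut ≠ 0 := by
    intro h
    have h1 : ‖(1 - t) • u‖ - ‖-(t • e)‖ ≤ ‖(1 - t) • u - -(t • e)‖ := norm_sub_norm_le _ _
    rw [sub_neg_eq_add, ← hutdef, h, norm_zero, norm_smul, norm_neg, norm_smul, hunorm, hen] at h1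
    simp only [Real.norm_eq_abs] at h1
    rw [abs_of_nonneg (by linarith : (0:ℝ) ≤ 1 - t), abs_of_nonneg htpos.le] at h1
    simp only [mul_one] at h1
    linarith
  have hutσ : ut ∈ σ := hut
  have hutnorm : 0 < ‖ut‖ := norm_pos_iff.mpr hutne
  have hkey : ‖d‖ ≤ -m := by
    have h1 := hm_le ut hutσ hutne
    rw [le_div_iff₀ hutnorm] at h1
    have h2 : f ut = ∑ j, d j * ut j := by
      apply hWf
      intro i
      have := hlin (fun j => (g i.1 j : ℝ)) (1 - t) t u e
      rw [hutdef, this, hu_act i, he_act i]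
      ring
    have h3 : (∑ j, d j * ut j) = (1 - t) * m + t * (-‖d‖) := by
      rw [hutdef, hlin, ← hfu, ← hde]
    have h4 : m * ‖ut‖ ≤ (1 - t) * m + t * (-‖d‖) := by
      rw [← h3, ← h2]; exact h1
    nlinarith [hutn1, hmneg, htpos]
  have hdu : ⟪-d, u⟫ = ‖-d‖ * ‖u‖ := by
    have hinner : ⟪d, u⟫ = ∑ j, d j * u j := by
      simp [PiLp.inner_apply, RCLike.inner_apply, conj_trivial, mul_comm]
    have hcs : -(‖d‖ * ‖u‖) ≤ ⟪d, u⟫ := by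
      have := abs_real_inner_le_norm d u
      cases abs_le.mp this with
      | intro h _ => linarith
    have hdum : ⟪d, u⟫ = m := by rw [hinner, ← hfu]
    rw [inner_neg_left, norm_neg, hdum, hunorm]
    rw [hdum, hunorm] at hcs
    have hmd : m = -‖d‖ := by
      simp only [mul_one] at hcs
      linarith
    rw [hmd]; ring
  have hue : u = e := by
    have h9 := inner_eq_norm_mul_iff_real.mp hdu
    rw [hunorm, norm_neg, one_smul] at h9
    -- h9 : -d = ‖d‖ • u
    rw [he, h9, smul_smul, inv_mul_cancel₀ hdn.ne', one_smul]
  -- hence -d = ‖d‖ • u : the minimizing ray is rational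
  have hdu' : ∀ j, -(d j) = ‖d‖ * u j := by
    intro j
    have h9 := inner_eq_norm_mul_iff_real.mp hdu
    rw [hunorm, norm_neg, one_smul] at h9
    have := congrArg (fun v : EuclideanSpace ℝ (Fin r) => v j) h9
    exact this
  -- clear denominators to get an integral direction
  set D : ℕ := Finset.univ.lcm (fun j => (dQ j).den) with hD
  have hDden : ∀ j, (dQ j).den ∣ D := fun j => Finset.dvd_lcm (Finset.mem_univ j)
  have hD0 : D ≠ 0 := by
    intro h
    obtain ⟨j, -, hj⟩ := Finset.lcm_eq_zero_iff.mp h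
    exact (dQ j).den_nz hj
  set wZ : Fin r → ℤ := fun j => -(((D / (dQ j).den : ℕ) : ℤ) * (dQ j).num) with hwZ
  have hwZQ : ∀ j, ((wZ j : ℤ) : ℚ) = -((D : ℚ) * dQ j) := by
    intro j
    obtain ⟨k, hk⟩ := hDden j
    have hdenpos : 0 < (dQ j).den := (dQ j).pos
    have hden0 : ((dQ j).den : ℚ) ≠ 0 := Nat.cast_ne_zero.mpr (dQ j).den_nz
    have hdiv : D / (dQ j).den = k := by rw [hk]; exact Nat.mul_div_cancel_left k hdenpos
    have hmul : ((dQ j).num : ℚ) = dQ j * ((dQ j).den : ℚ) :=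
      (div_eq_iff hden0).mp (Rat.num_div_den (dQ j))
    simp only [hwZ, hdiv]
    push_cast [hk]
    rw [hmul]
    ring
  have hdQ0 : ∃ j, dQ j ≠ 0 := by
    by_contra h
    push_neg at h
    apply hd0
    ext j
    rw [hd_apply, h j]
    norm_num
  obtain ⟨j₁, hj₁⟩ := hdQ0
  have hwZ0 : wZ j₁ ≠ 0 := by
    intro h
    have h2 := hwZQ j₁
    rw [h] at h2
    have hD0' : ((D:ℚ)) ≠ 0 := Nat.cast_ne_zero.mpr hD0
    have h4 : (D : ℚ) * dQ j₁ = 0 := by push_cast at h2; linarith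
    rcases mul_eq_zero.mp h4 with h3 | h3
    · exact hD0' h3
    · exact hj₁ h3
  set G : ℤ := Finset.univ.gcd wZ with hG
  have hGdvd : ∀ j, G ∣ wZ j := fun j => Finset.gcd_dvd (Finset.mem_univ j)
  have hG0 : G ≠ 0 := fun h => hwZ0 (Finset.gcd_eq_zero_iff.mp h j₁ (Finset.mem_univ j₁))
  have hGnn : 0 ≤ G := by
    have h1 : normalize G = G := Finset.normalize_gcd
    have h2 : |G| = G := by rw [Int.abs_eq_normalize, h1]
    rw [← h2]
    exact abs_nonneg G
  have hGpos : 0 < G := lt_of_le_of_ne hGnn (Ne.symm hG0)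
  set sZ : Fin r → ℤ := fun j => wZ j / G with hsZdef
  have hGs : ∀ j, G * sZ j = wZ j := fun j => Int.mul_ediv_cancel' (hGdvd j)
  set s : EuclideanSpace ℝ (Fin r) := (WithLp.equiv 2 (Fin r → ℝ)).symm (fun j => (sZ j : ℝ))
    with hsdef
  have hs_apply : ∀ j, s j = (sZ j : ℝ) := fun j => rfl
  have hgcd1 : Finset.univ.gcd sZ = 1 := by
    have h1 : G = normalize G * Finset.univ.gcd sZ := by
      conv_lhs => rw [hG]
      have h2 : wZ = fun j => G * sZ j := funext fun j => (hGs j).symm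
      rw [h2, Finset.gcd_mul_left]
    rw [Finset.normalize_gcd, hG] at h1
    have h3 := h1.symm
    rcases (mul_eq_left₀ hG0).mp h3 with h4
    exact h4
  have hsZ1 : sZ j₁ ≠ 0 := by
    intro h
    apply hwZ0
    rw [← hGs j₁, h, mul_zero]
  -- s is a positive multiple of u
  set τ : ℝ := (D : ℝ) * ‖d‖ / (G : ℝ) with hτ
  have hGR : (0:ℝ) < (G:ℝ) := by exact_mod_cast hGpos
  have hDR : (0:ℝ) < (D:ℝ) := by exact_mod_cast Nat.pos_of_ne_zero hD0
  have hτpos : 0 < τ := by rw [hτ]; positivity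
  have hsu : s = τ • u := by
    ext j
    show (sZ j : ℝ) = τ * u j
    have h1 : (G:ℝ) * (sZ j : ℝ) = (wZ j : ℝ) := by exact_mod_cast hGs j
    have h2 : ((wZ j : ℚ) : ℝ) = ((-((D : ℚ) * dQ j) : ℚ) : ℝ) := by rw [hwZQ j]
    push_cast at h2
    have h3 : -(d j) = ‖d‖ * u j := hdu' j
    rw [hd_apply] at h3
    have h4 : (G:ℝ) * (sZ j : ℝ) = (D:ℝ) * (‖d‖ * u j) := by
      rw [h1, h2, ← h3]; ring
    rw [hτ]
    field_simp at h4 ⊢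
    linarith [h4]
  have hs0 : s ≠ 0 := by
    intro h
    apply hsZ1
    have : s j₁ = 0 := by rw [h]; rfl
    rw [hs_apply] at this
    exact Int.cast_eq_zero.mp this
  have hsn : 0 < ‖s‖ := norm_pos_iff.mpr hs0
  have hsσ : s ∈ σ := by rw [hsu]; exact hcone u huσ τ hτpos.le
  have hsm : f s / ‖s‖ = m := by
    rw [hsu, hfsmul, norm_smul, Real.norm_eq_abs, abs_of_pos hτpos, hunorm, mul_one,
      mul_comm, mul_div_assoc, div_self hτpos.ne', mul_one]
  have hs_int : ∀ j, ∃ k : ℤ, s j = (k : ℝ) := fun j => ⟨sZ j, rfl⟩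
  have hindiv : ∀ (N : ℕ) (q : EuclideanSpace ℝ (Fin r)),
      (∀ j, ∃ k : ℤ, q j = (k : ℝ)) → s = (N : ℝ) • q → N = 1 := by
    intro N q hq hNq
    choose k hk using hq
    have hdvd : ∀ j, (N:ℤ) ∣ sZ j := by
      intro j
      refine ⟨k j, ?_⟩
      have h1 : s j = (N:ℝ) * q j := by rw [hNq]; rfl
      rw [hs_apply, hk] at h1
      exact Int.cast_injective (α := ℝ) (by rw [h1]; push_cast; ring)
    have h2 : (N:ℤ) ∣ Finset.univ.gcd sZ := Finset.dvd_gcd fun j _ => hdvd j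
    rw [hgcd1] at h2
    have h3 : ((N:ℕ):ℤ) ∣ ((1:ℕ):ℤ) := by exact_mod_cast h2
    exact Nat.dvd_one.mp (Int.natCast_dvd_natCast.mp h3)
  have heq7 : ∀ v ∈ σ, v ≠ 0 → f v / ‖v‖ = m → ∃ t : ℝ, 0 < t ∧ v = t • s := by
    intro v hv hv0 hveq
    have hvn : 0 < ‖v‖ := norm_pos_iff.mpr hv0
    have hw : ‖v‖⁻¹ • v = u := by
      apply huniq _ (hcone _ hv _ (by positivity)) (norm_smul_inv_norm hv0)
      rw [hfsmul, inv_mul_eq_div]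
      exact hveq
    have hvu : v = ‖v‖ • u := by
      rw [← hw, smul_smul, mul_inv_cancel₀ hvn.ne', one_smul]
    refine ⟨‖v‖ * τ⁻¹, by positivity, ?_⟩
    rw [hsu, smul_smul, mul_assoc, inv_mul_cancel₀ hτpos.ne', mul_one]
    exact hvu
  refine ⟨s, ⟨hsσ, hs0, hs_int, hindiv, ?_, ?_, ?_⟩, ?_⟩
  · rw [hsm]; exact hmneg
  · intro v hv hv0
    rw [hsm]
    exact hm_le v hv hv0
  · intro v hv hv0 hveq
    rw [hsm] at hveq
    exact heq7 v hv hv0 hveq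
  · rintro s' ⟨hs'σ, hs'0, hs'int, hs'ind, hs'neg, hs'min, hs'eq⟩
    have hs'n : 0 < ‖s'‖ := norm_pos_iff.mpr hs'0
    have h1 : f s' / ‖s'‖ = m := by
      refine le_antisymm ?_ (hm_le s' hs'σ hs'0)
      have := hs'min s hsσ hs0
      rwa [hsm] at this
    obtain ⟨t, htp, hts⟩ := heq7 s' hs'σ hs'0 h1
    choose kZ hkZ using hs'int
    have hcomp : ∀ j, (kZ j : ℝ) = t * (sZ j : ℝ) := by
      intro j
      rw [← hkZ j, hts]
      rfl
    set a : ℤ := kZ j₁ with ha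
    set b : ℤ := sZ j₁ with hb
    have hbR : ((b:ℤ):ℝ) ≠ 0 := Int.cast_ne_zero.mpr hsZ1
    have htab : (a : ℝ) = t * (b : ℝ) := hcomp j₁
    have hab : ∀ j, kZ j * b = a * sZ j := by
      intro j
      have h2 : ((kZ j : ℤ):ℝ) * (b:ℝ) = (a:ℝ) * ((sZ j : ℤ):ℝ) := by
        rw [hcomp j, htab]; ring
      exact_mod_cast h2
    set n : ℕ := Int.gcd a b with hn
    have ha0 : a ≠ 0 := by
      intro h
      rw [h] at htab
      push_cast at htab
      rcases mul_eq_zero.mp htab.symm with h3 | h3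
      · exact htp.ne' h3
      · exact hbR h3
    have hn0 : (n:ℤ) ≠ 0 := by
      simp only [hn, Ne, Int.natCast_eq_zero, Int.gcd_eq_zero_iff]
      rintro ⟨h, -⟩
      exact ha0 h
    have hnpos : 0 < n := Nat.pos_of_ne_zero (by exact_mod_cast hn0)
    set p : ℤ := a / (n:ℤ) with hp
    set q : ℤ := b / (n:ℤ) with hq
    have hap : a = (n:ℤ) * p := (Int.mul_ediv_cancel' (Int.gcd_dvd_left a b)).symm
    have hbq : b = (n:ℤ) * q := (Int.mul_ediv_cancel' (Int.gcd_dvd_right a b)).symm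
    have hpq : Int.gcd p q = 1 := Int.gcd_div_gcd_div_gcd (by exact_mod_cast hnpos)
    have habj : ∀ j, kZ j * q = p * sZ j := by
      intro j
      have h2 := hab j
      rw [hap, hbq] at h2
      have h3 : (n:ℤ) * (kZ j * q) = (n:ℤ) * (p * sZ j) := by ring_nf; ring_nf at h2; linarith
      exact mul_left_cancel₀ hn0 h3
    have hqd : ∀ j, q ∣ sZ j := by
      intro j
      have h2 : q ∣ p * sZ j := ⟨kZ j, by rw [← habj j]; ring⟩
      exact Int.dvd_of_dvd_mul_right_of_gcd_one h2 (by rwa [Int.gcd_comm])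
    have hq1 : q ∣ 1 := by
      have h2 : q ∣ Finset.univ.gcd sZ := Finset.dvd_gcd fun j _ => hqd j
      rwa [hgcd1] at h2
    have hq2 : q * q = 1 := by
      rcases Int.isUnit_iff.mp (isUnit_of_dvd_one hq1) with h | h <;> rw [h] <;> ring
    have hkP : ∀ j, kZ j = (p * q) * sZ j := by
      intro j
      have h2 : kZ j * (q * q) = (p * q) * sZ j := by
        rw [← mul_assoc, habj j]; ring
      rwa [hq2, mul_one] at h2
    have htP : t = ((p * q : ℤ) : ℝ) := by
      have hnR : ((n:ℤ):ℝ) ≠ 0 := Int.cast_ne_zero.mpr hn0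
      have h2 : (a:ℝ) * (q:ℝ) = t * (b:ℝ) * (q:ℝ) := by rw [htab]
      have h3 : ((n:ℤ):ℝ) * ((p:ℝ) * (q:ℝ)) = ((n:ℤ):ℝ) * t := by
        have h4 : (a:ℝ) = ((n:ℤ):ℝ) * (p:ℝ) := by exact_mod_cast congrArg (Int.cast : ℤ → ℝ) hap
        have h5 : (b:ℝ) = ((n:ℤ):ℝ) * (q:ℝ) := by exact_mod_cast congrArg (Int.cast : ℤ → ℝ) hbq
        have hq2R : (q:ℝ) * (q:ℝ) = 1 := by exact_mod_cast congrArg (Int.cast : ℤ → ℝ) hq2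
        rw [h4, h5] at h2
        linear_combination h2 + (t * ((n:ℤ):ℝ)) * hq2R
      have h6 := mul_left_cancel₀ hnR h3
      push_cast
      linarith [h6]
    have hPpos : 0 < p * q := by
      have : (0:ℝ) < ((p * q : ℤ) : ℝ) := htP ▸ htp
      exact_mod_cast this
    have hs'P : s' = (((p * q).toNat : ℕ) : ℝ) • s := by
      have h8 : (((p * q).toNat : ℕ) : ℝ) = ((p * q : ℤ) : ℝ) := by
        exact_mod_cast congrArg (fun z : ℤ => (z : ℝ)) (Int.toNat_of_nonneg hPpos.le)
      rw [hts, htP, h8]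
    have hN1 := hs'ind (p * q).toNat s hs_int hs'P
    have hP1 : p * q = 1 := by
      have h2 : ((p * q).toNat : ℤ) = p * q := Int.toNat_of_nonneg hPpos.le
      rw [hN1] at h2
      exact_mod_cast h2.symm
    rw [hts, htP, hP1]
    push_cast
    rw [one_smul]
end

section
/- Hesselink's boundary ordering: with G diagonalizable acting diagonally on X = 𝔸ⁿ and χ a character, define for each minimizing one-parameter subgroup λ the stratum S^χ_λ = {x unstable : λ_{χ,x} = λ}. If a point z lies in S^χ_λ ∩ ∂S^χ_{λ′} with λ ≠ λ′, then ⟨χ,λ⟩/‖λ‖ < ⟨χ,λ′⟩/‖λ′‖ (i.e., λ > λ′ in the instability order). -/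
namespace ToricVSIT

variable {n r : ℕ}

/-- The real vector associated to an integral one-parameter subgroup. -/
noncomputable def toE (r : ℕ) (lam : Fin r → ℤ) : EuclideanSpace ℝ (Fin r) :=
  (WithLp.equiv 2 (Fin r → ℝ)).symm fun j => (lam j : ℝ)

/-- The pairing `⟨χ, v⟩` of a character (integer vector) with a real vector. -/
def pairR (c : Fin r → ℤ) (v : EuclideanSpace ℝ (Fin r)) : ℝ :=
  ∑ j, (c j : ℝ) * v j

/-- The cone `σ_x` of (real) one-parameter subgroups whose limit at `x` exists:
`⟨χ_i, v⟩ ≥ 0` for every coordinate `i` in the state of `x`. -/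
def coneOf (χmat : Fin n → Fin r → ℤ) (x : Fin n → ℂ) :
    Set (EuclideanSpace ℝ (Fin r)) :=
  {v | ∀ i, x i ≠ 0 → 0 ≤ ∑ j, (χmat i j : ℝ) * v j}

/-- `λ` is `χ`-adapted to `x`: it lies in `σ_x`, is nonzero, and minimizes the
(negative) normalized pairing `⟨χ, -⟩/‖-‖` over nonzero elements of `σ_x`. -/
def adapted (χmat : Fin n → Fin r → ℤ) (chi : Fin r → ℤ) (lam : Fin r → ℤ)
    (x : Fin n → ℂ) : Prop :=
  toE r lam ∈ coneOf χmat x ∧ toE r lam ≠ 0 ∧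
    pairR chi (toE r lam) / ‖toE r lam‖ < 0 ∧
    ∀ v ∈ coneOf χmat x, v ≠ 0 →
      pairR chi (toE r lam) / ‖toE r lam‖ ≤ pairR chi v / ‖v‖

/-- The Hesselink stratum indexed by `λ`. -/
def stratum (χmat : Fin n → Fin r → ℤ) (chi : Fin r → ℤ) (lam : Fin r → ℤ) :
    Set (Fin n → ℂ) :=
  {x | adapted χmat chi lam x}


open ToricVSIT

/-- Hesselink's boundary ordering: if `z` lies in the stratum `S^χ_λ` and in the
boundary of the stratum `S^χ_{λ'}` (with `λ, λ'` distinct indivisible adapted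
one-parameter subgroups), then `⟨χ,λ⟩/‖λ‖ < ⟨χ,λ'⟩/‖λ'‖`, i.e. `λ > λ'` in the
instability order. -/
theorem hesselink_boundary_order (n r : ℕ) (χmat : Fin n → Fin r → ℤ)
    (chi : Fin r → ℤ) (lam lam' : Fin r → ℤ)
    (hind : ∀ (N : ℕ) (μ : Fin r → ℤ), lam = (fun j => (N : ℤ) * μ j) → N = 1)
    (hind' : ∀ (N : ℕ) (μ : Fin r → ℤ), lam' = (fun j => (N : ℤ) * μ j) → N = 1)
    (hne : lam ≠ lam')
    (z : Fin n → ℂ)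
    (hz : z ∈ stratum χmat chi lam)
    (hzb : z ∈ closure (stratum χmat chi lam') \ stratum χmat chi lam') :
    pairR chi (toE r lam) / ‖toE r lam‖ < pairR chi (toE r lam') / ‖toE r lam'‖ := by
  classical
  -- λ' is nonzero as a real vector (from indivisibility)
  have hlam'ne : toE r lam' ≠ 0 := by
    intro h0
    have hz0 : ∀ j, lam' j = 0 := by
      intro j
      have : (toE r lam') j = (0 : EuclideanSpace ℝ (Fin r)) j := by rw [h0]
      have h1 : ((lam' j : ℝ)) = 0 := this
      exact_mod_cast h1
    have : lam' = (fun j => ((0 : ℕ) : ℤ) * 0) := by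
      funext j; simp [hz0 j]
    have := hind' 0 (fun _ => 0) this
    simp at this
  -- the closed superset X_{λ'}
  set C : Set (Fin n → ℂ) :=
    {x | ∀ i, (∑ j, (χmat i j : ℝ) * (toE r lam') j) < 0 → x i = 0} with hC
  have hCclosed : IsClosed C := by
    have : C = ⋂ i, {x : Fin n → ℂ |
        (∑ j, (χmat i j : ℝ) * (toE r lam') j) < 0 → x i = 0} := by
      ext x; simp [hC, Set.mem_iInter]
    rw [this]
    refine isClosed_iInter fun i => ?_
    by_cases hp : (∑ j, (χmat i j : ℝ) * (toE r lam') j) < 0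
    · have : {x : Fin n → ℂ |
          (∑ j, (χmat i j : ℝ) * (toE r lam') j) < 0 → x i = 0}
          = {x | x i = 0} := by
        ext x; simp [hp]
      rw [this]
      exact isClosed_eq (continuous_apply i) continuous_const
    · have : {x : Fin n → ℂ |
          (∑ j, (χmat i j : ℝ) * (toE r lam') j) < 0 → x i = 0}
          = Set.univ := by
        ext x; simp [hp]
      rw [this]; exact isClosed_univ
  have hsub : stratum χmat chi lam' ⊆ C := by
    intro x hx i hi
    by_contra hxi
    exact absurd (hx.1 i hxi) (not_le.mpr hi)
  have hzC : z ∈ C := closure_minimal hsub hCclosed hzb.1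
  -- hence λ' ∈ σ_z
  have hcone : toE r lam' ∈ coneOf χmat z := by
    intro i hzi
    by_contra hlt
    exact hzi (hzC i (not_le.mp hlt))
  -- minimality of λ at z gives ≤
  have hle : pairR chi (toE r lam) / ‖toE r lam‖
      ≤ pairR chi (toE r lam') / ‖toE r lam'‖ :=
    hz.2.2.2 _ hcone hlam'ne
  rcases lt_or_eq_of_le hle with h | h
  · exact h
  · exfalso
    apply hzb.2
    refine ⟨hcone, hlam'ne, ?_, ?_⟩
    · rw [← h]; exact hz.2.2.1
    · intro v hv hvne
      rw [← h]
      exact hz.2.2.2 v hv hvne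
end ToricVSIT
end

section
/- Absorption property of strata: let χ be a character of a diagonalizable group G acting diagonally on 𝔸ⁿ, λ an adapted one-parameter subgroup, and C ⊆ A ⊆ [n] subsets such that both L(C) and L(A) are contained in the stratum S^χ_λ. Then L(B) ⊆ S^χ_λ for every B with C ⊆ B ⊆ A. -/
namespace ToricVSIT

variable {n r : ℕ}

open ToricVSIT

/-- The locally closed torus-stratum `L(S)` of points with state exactly `S`. -/
def LsetOf {n : ℕ} (S : Set (Fin n)) : Set (Fin n → ℂ) :=
  {y | ∀ i, y i ≠ 0 ↔ i ∈ S}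

/-- Absorption property of strata: if `C ⊆ B ⊆ A` and both `L(C)` and `L(A)` are
contained in the stratum `S^χ_λ`, then so is `L(B)`. -/
theorem stratum_absorb (n r : ℕ) (χmat : Fin n → Fin r → ℤ) (chi : Fin r → ℤ)
    (lam : Fin r → ℤ) (C B A : Set (Fin n))
    (hCB : C ⊆ B) (hBA : B ⊆ A)
    (hC : LsetOf C ⊆ stratum χmat chi lam)
    (hA : LsetOf A ⊆ stratum χmat chi lam) :
    LsetOf B ⊆ stratum χmat chi lam := by
  classical
  intro x hx
  -- indicator points in L(A) and L(C)
  set yA : Fin n → ℂ := fun i => if i ∈ A then 1 else 0 with hyA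
  set yC : Fin n → ℂ := fun i => if i ∈ C then 1 else 0 with hyC
  have hyAmem : yA ∈ LsetOf A := by
    intro i; simp [hyA]
  have hyCmem : yC ∈ LsetOf C := by
    intro i; simp [hyC]
  obtain ⟨hlamA, hne, hneg, _⟩ := hA hyAmem
  obtain ⟨_, _, _, hminC⟩ := hC hyCmem
  refine ⟨?_, hne, hneg, ?_⟩
  · intro i hi
    exact hlamA i (by simp [hyA, hBA ((hx i).mp hi)])
  · intro v hv hvne
    refine hminC v ?_ hvne
    intro i hi
    have hiC : i ∈ C := by
      by_contra h; simp [hyC, h] at hi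
    exact hv i ((hx i).mpr (hCB hiC))
end ToricVSIT
end

section
/- Maximal state set of a stratum: let χ be a character, λ an adapted indivisible one-parameter subgroup, and set 𝓜 = {i ∈ [n] : ⟨χᵢ, λ⟩ ≥ 0}. Then 𝓜 is the unique maximal subset of [n] with L(𝓜) ⊆ S^χ_λ: every S with L(S) ⊆ S^χ_λ satisfies S ⊆ 𝓜, and L(𝓜) ⊆ S^χ_λ. Consequently V([n]−𝓜) = X_λ, the subspace of points whose limit under λ exists. -/
namespace ToricVSIT

variable {n r : ℕ}

open ToricVSIT

/-- The maximal state set `𝓜 = {i : ⟨χᵢ, λ⟩ ≥ 0}` of a one-parameter subgroup. -/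
def maxState {n r : ℕ} (χmat : Fin n → Fin r → ℤ) (lam : Fin r → ℤ) : Set (Fin n) :=
  {i | 0 ≤ ∑ j, χmat i j * lam j}

/-- Maximal state set of a stratum: `𝓜 = {i : ⟨χᵢ, λ⟩ ≥ 0}` is the unique maximal
subset with `L(𝓜) ⊆ S^χ_λ`: every `S` with `L(S) ⊆ S^χ_λ` satisfies `S ⊆ 𝓜`, and
`L(𝓜) ⊆ S^χ_λ`.  Consequently `V([n] ∖ 𝓜) = X_λ`, the subspace of points whose
limit under `λ` exists. -/
theorem maximal_state_of_stratum (n r : ℕ) (χmat : Fin n → Fin r → ℤ)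
    (chi : Fin r → ℤ) (lam : Fin r → ℤ)
    (hlam : ∃ x : Fin n → ℂ, adapted χmat chi lam x) :
    (∀ S : Set (Fin n), LsetOf S ⊆ stratum χmat chi lam → S ⊆ maxState χmat lam) ∧
      LsetOf (maxState χmat lam) ⊆ stratum χmat chi lam ∧
      {y : Fin n → ℂ | ∀ i ∉ maxState χmat lam, y i = 0} =
        {y : Fin n → ℂ | ∀ i, (∑ j, χmat i j * lam j) < 0 → y i = 0} := by

  classical
  obtain ⟨x, hx⟩ := hlam
  have hcoords : ∀ i, (toE r lam) i = (lam i : ℝ) := fun i => rfl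
  have hcast : ∀ i : Fin n, (∑ j, (χmat i j : ℝ) * (toE r lam) j)
      = ((∑ j, χmat i j * lam j : ℤ) : ℝ) := by
    intro i
    push_cast
    rfl
  refine ⟨?_, ?_, ?_⟩
  · intro S hS i hi
    set y : Fin n → ℂ := fun k => if k ∈ S then 1 else 0 with hy
    have hyL : y ∈ LsetOf S := by
      intro k
      by_cases hk : k ∈ S <;> simp [hy, hk]
    have hys := hS hyL
    have h1 := hys.1 i (by simp [hy, hi])
    rw [hcast i] at h1
    exact_mod_cast h1
  · intro y hyL
    -- σ_y ⊆ σ_x since the state of x is contained in 𝓜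
    have hsub : coneOf χmat y ⊆ coneOf χmat x := by
      intro v hv i hxi
      have hxM : i ∈ maxState χmat lam := by
        have := hx.1 i hxi
        rw [hcast i] at this
        exact_mod_cast this
      exact hv i ((hyL i).mpr hxM)
    refine ⟨?_, hx.2.1, hx.2.2.1, ?_⟩
    · intro i hyi
      have hiM : i ∈ maxState χmat lam := (hyL i).mp hyi
      rw [hcast i]
      exact_mod_cast hiM
    · intro v hv hv0
      exact hx.2.2.2 v (hsub hv) hv0
  · ext y
    simp only [Set.mem_setOf_eq, maxState, not_le]
end ToricVSIT
end

section
/- Equidistance locus to two subspaces: let V be a finite-dimensional real inner product space and W₁, W₂ subspaces with no containment between them. Then the set Z = {v ∈ V : dist(v, W₁) = dist(v, W₂)} can be written, in suitable orthonormal coordinates, as the zero set of x₁² + ⋯ + x_m² − y₁² − ⋯ − y_n² with m, n ≥ 1 equal to the codimensions of W₁ and W₂ in W₁ + W₂ respectively; consequently Z is a C^∞ regular submanifold of V of codimension 1 away from a linear subspace of codimension at least 2. -/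
/-!
Put `W = W₁ ⊔ W₂` and `Aₖ = Wₖᗮ ⊓ W`. As `Wₖ ≤ W`, Pythagoras gives
`dist(v, Wₖ)² = dist(v, W)² + ‖P_{Aₖ} v‖²`, and `‖P_{Aₖ} v‖²` is the sum of the squared
coordinates of `v` along an orthonormal basis of `Aₖ`; so equidistance is the quadratic equation,
with `dim Aₖ` the codimension of `Wₖ` in `W`, positive by non-containment. Since
`A₁ ⊓ A₂ ≤ Wᗮ ⊓ W = ⊥`, the two bases together are linearly independent, so the gradient
`2 (∑ ⟪v, gᵢ⟫ gᵢ - ∑ ⟪v, hⱼ⟫ hⱼ)` of the quadratic form vanishes only on the orthogonal complement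
of their span, which has codimension `m + n ≥ 2`.
-/

open RealInnerProductSpace Module Submodule Set

section

variable {V : Type*} [NormedAddCommGroup V] [InnerProductSpace ℝ V]

theorem norm_sub_starProjection_sq_of_le {K L : Submodule ℝ V}
    [K.HasOrthogonalProjection] [L.HasOrthogonalProjection] (hKL : K ≤ L)
    {ι : Type*} [Fintype ι] (b : OrthonormalBasis ι ℝ ↥(Kᗮ ⊓ L)) (v : V) :
    ‖v - K.starProjection v‖ ^ 2 = ‖v - L.starProjection v‖ ^ 2 + ∑ i, ⟪v, b i⟫ ^ 2 := by
  have hvL : v - L.starProjection v ∈ Lᗮ := L.sub_starProjection_mem_orthogonal v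
  have hu : L.starProjection v - K.starProjection v ∈ Kᗮ ⊓ L := by
    refine ⟨?_, L.sub_mem (L.starProjection_apply_mem v) (hKL (K.starProjection_apply_mem v))⟩
    rw [← sub_sub_sub_cancel_left _ _ v]
    exact sub_mem (K.sub_starProjection_mem_orthogonal v) (orthogonal_le hKL hvL)
  have hcoord : ∀ i, ⟪L.starProjection v - K.starProjection v, b i⟫ = ⟪v, b i⟫ := fun i => by
    have hL : ⟪v - L.starProjection v, b i⟫ = 0 := (mem_orthogonal' _ _).1 hvL _ (b i).2.2
    have hK : ⟪K.starProjection v, b i⟫ = 0 :=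
      (mem_orthogonal _ _).1 (b i).2.1 _ (K.starProjection_apply_mem v)
    rw [inner_sub_left] at hL
    rw [inner_sub_left, hK]
    linarith
  have hnorm : ‖L.starProjection v - K.starProjection v‖ ^ 2 = ∑ i, ⟪v, b i⟫ ^ 2 := by
    simpa [← hcoord] using (b.sum_sq_inner_left ⟨_, hu⟩).symm
  rw [← sub_add_sub_cancel v (L.starProjection v), norm_add_sq_real,
    (mem_orthogonal' _ _).1 hvL _ hu.2, hnorm, mul_zero, add_zero]

theorem norm_sub_starProjection_eq_iff {K₁ K₂ L : Submodule ℝ V}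
    [K₁.HasOrthogonalProjection] [K₂.HasOrthogonalProjection] [L.HasOrthogonalProjection]
    (h₁ : K₁ ≤ L) (h₂ : K₂ ≤ L) {ι κ : Type*} [Fintype ι] [Fintype κ]
    (b₁ : OrthonormalBasis ι ℝ ↥(K₁ᗮ ⊓ L)) (b₂ : OrthonormalBasis κ ℝ ↥(K₂ᗮ ⊓ L)) (v : V) :
    ‖v - K₁.starProjection v‖ = ‖v - K₂.starProjection v‖ ↔
      ∑ i, ⟪v, b₁ i⟫ ^ 2 = ∑ j, ⟪v, b₂ j⟫ ^ 2 := by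
  rw [← sq_eq_sq₀ (norm_nonneg _) (norm_nonneg _), norm_sub_starProjection_sq_of_le h₁ b₁,
    norm_sub_starProjection_sq_of_le h₂ b₂, add_right_inj]

theorem finrank_inf_orthogonal_pos {K L : Submodule ℝ V} [FiniteDimensional ℝ L]
    (hKL : K ≤ L) (hLK : ¬ L ≤ K) : 0 < finrank ℝ ↥(Kᗮ ⊓ L) := by
  have hdim := finrank_add_inf_finrank_orthogonal hKL
  by_contra h0
  exact hLK (eq_of_le_of_finrank_eq hKL (by omega)).ge

theorem disjoint_inf_orthogonal_sup (K₁ K₂ : Submodule ℝ V) :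
    Disjoint (K₁ᗮ ⊓ (K₁ ⊔ K₂)) (K₂ᗮ ⊓ (K₁ ⊔ K₂)) := by
  rw [disjoint_iff, inf_inf_inf_comm, inf_orthogonal, inf_idem, inf_comm, inf_orthogonal_eq_bot]

theorem OrthonormalBasis.linearIndependent_sum_elim_coe {A B : Submodule ℝ V}
    (hAB : Disjoint A B) {ι κ : Type*} [Fintype ι] [Fintype κ] (bA : OrthonormalBasis ι ℝ A)
    (bB : OrthonormalBasis κ ℝ B) :
    LinearIndependent ℝ (Sum.elim (fun i => (bA i : V)) (fun j => (bB j : V))) :=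
  (bA.orthonormal.comp_linearIsometry A.subtypeₗᵢ).linearIndependent.sum_type
    (bB.orthonormal.comp_linearIsometry B.subtypeₗᵢ).linearIndependent <|
    hAB.mono (span_le.2 (range_subset_iff.2 fun i => (bA i).2))
      (span_le.2 (range_subset_iff.2 fun j => (bB j).2))

theorem finrank_orthogonal_span_add_card [FiniteDimensional ℝ V] {ι : Type*} [Fintype ι]
    {e : ι → V} (he : LinearIndependent ℝ e) :
    finrank ℝ ↥(span ℝ (range e))ᗮ + Fintype.card ι = finrank ℝ V := by
  rw [← finrank_span_eq_card he, add_comm, finrank_add_finrank_orthogonal]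

theorem hasFDerivAt_sum_inner_sq {ι : Type*} [Fintype ι] (e : ι → V) (v : V) :
    HasFDerivAt (fun w => ∑ i, ⟪w, e i⟫ ^ 2) (innerSL ℝ ((2 : ℝ) • ∑ i, ⟪v, e i⟫ • e i)) v := by
  have hinner : ∀ x : V, HasFDerivAt (fun w => ⟪w, x⟫) (innerSL ℝ x) v := fun x => by
    rw [show (fun w => ⟪w, x⟫) = innerSL ℝ x from funext fun w => real_inner_comm x w]
    exact (innerSL ℝ x).hasFDerivAt
  refine (HasFDerivAt.fun_sum fun i _ => (hinner (e i)).pow 2).congr_fderiv ?_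
  ext u
  simp [Finset.mul_sum, mul_comm, mul_left_comm, mul_assoc]

theorem mem_orthogonal_span_of_sum_smul_eq {ι κ : Type*} [Fintype ι] [Fintype κ]
    {g : ι → V} {h : κ → V} (hli : LinearIndependent ℝ (Sum.elim g h)) {v : V}
    (hv : ∑ i, ⟪v, g i⟫ • g i = ∑ j, ⟪v, h j⟫ • h j) :
    v ∈ (span ℝ (range (Sum.elim g h)))ᗮ := by
  have hcoeff := Fintype.linearIndependent_iff.1 hli (Sum.elim (⟪v, g ·⟫) (- ⟪v, h ·⟫))
    (by simp [Fintype.sum_sum_type, hv])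
  refine (mem_orthogonal' _ _).2 fun _ hu =>
    (span_le (p := LinearMap.ker (innerₛₗ ℝ v))).2 (range_subset_iff.2 fun k => ?_) hu
  rcases k with i | j
  · simpa using hcoeff (.inl i)
  · simpa using hcoeff (.inr j)

theorem fderiv_sum_inner_sq_sub_sum_inner_sq_ne_zero {ι κ : Type*} [Fintype ι] [Fintype κ]
    {g : ι → V} {h : κ → V} (hli : LinearIndependent ℝ (Sum.elim g h)) {v : V}
    (hv : v ∉ (span ℝ (range (Sum.elim g h)))ᗮ) :
    fderiv ℝ (fun w => ∑ i, ⟪w, g i⟫ ^ 2 - ∑ j, ⟪w, h j⟫ ^ 2) v ≠ 0 := by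
  rw [((hasFDerivAt_sum_inner_sq g v).fun_sub (hasFDerivAt_sum_inner_sq h v)).fderiv, ← map_sub,
    ← smul_sub]
  intro hD
  refine hv (mem_orthogonal_span_of_sum_smul_eq hli (sub_eq_zero.1 ?_))
  have h2 : (2 : ℝ) • (∑ i, ⟪v, g i⟫ • g i - ∑ j, ⟪v, h j⟫ • h j) = 0 :=
    norm_eq_zero.1 (by rw [← innerSL_apply_norm ℝ, hD, norm_zero])
  exact (smul_eq_zero.1 h2).resolve_left two_ne_zero

end

/-- Equidistance locus to two subspaces with no mutual containment: the locus
`Z = {v : dist(v,W₁) = dist(v,W₂)}` is, in suitable orthonormal coordinates, the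
zero set of `x₁² + ⋯ + x_m² - y₁² - ⋯ - y_n²` with `m, n ≥ 1` the codimensions of
`W₁` and `W₂` in `W₁ + W₂`; consequently, away from a linear subspace of codimension
at least `2`, `Z` is a regular level set (the defining function has nonvanishing
derivative there), hence a `C^∞` submanifold of codimension `1`. -/
theorem equidistance_locus_structure {V : Type*} [NormedAddCommGroup V]
    [InnerProductSpace ℝ V] [FiniteDimensional ℝ V]
    (W₁ W₂ : Submodule ℝ V) (h12 : ¬ W₁ ≤ W₂) (h21 : ¬ W₂ ≤ W₁) :
    ∃ (m n : ℕ) (g : Fin m → V) (h : Fin n → V),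
      1 ≤ m ∧ 1 ≤ n ∧
      m + Module.finrank ℝ W₁ = Module.finrank ℝ ↥(W₁ ⊔ W₂) ∧
      n + Module.finrank ℝ W₂ = Module.finrank ℝ ↥(W₁ ⊔ W₂) ∧
      Orthonormal ℝ g ∧ Orthonormal ℝ h ∧
      LinearIndependent ℝ (Sum.elim g h) ∧
      (∀ v : V,
        ‖v - (Submodule.orthogonalProjectionOnto W₁ v : V)‖ = ‖v - (Submodule.orthogonalProjectionOnto W₂ v : V)‖
          ↔ ∑ i, ⟪v, g i⟫ ^ 2 = ∑ j, ⟪v, h j⟫ ^ 2) ∧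
      ∃ V' : Submodule ℝ V, Module.finrank ℝ V' + 2 ≤ Module.finrank ℝ V ∧
        ∀ v : V, v ∉ V' →
          (∑ i, ⟪v, g i⟫ ^ 2 = ∑ j, ⟪v, h j⟫ ^ 2) →
          fderiv ℝ (fun w : V => ∑ i, ⟪w, g i⟫ ^ 2 - ∑ j, ⟪w, h j⟫ ^ 2) v ≠ 0 := by
  have hle₁ : W₁ ≤ W₁ ⊔ W₂ := le_sup_left
  have hle₂ : W₂ ≤ W₁ ⊔ W₂ := le_sup_right
  let b₁ := stdOrthonormalBasis ℝ ↥(W₁ᗮ ⊓ (W₁ ⊔ W₂))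
  let b₂ := stdOrthonormalBasis ℝ ↥(W₂ᗮ ⊓ (W₁ ⊔ W₂))
  have hli :=
    OrthonormalBasis.linearIndependent_sum_elim_coe (disjoint_inf_orthogonal_sup W₁ W₂) b₁ b₂
  have hm := finrank_inf_orthogonal_pos hle₁ (fun h => h21 (le_sup_right.trans h))
  have hn := finrank_inf_orthogonal_pos hle₂ (fun h => h12 (le_sup_left.trans h))
  have hcodim := finrank_orthogonal_span_add_card hli
  refine ⟨_, _, (b₁ · : _ → V), (b₂ · : _ → V), hm, hn,
    by rw [add_comm, finrank_add_inf_finrank_orthogonal hle₁],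
    by rw [add_comm, finrank_add_inf_finrank_orthogonal hle₂],
    b₁.orthonormal.comp_linearIsometry (subtypeₗᵢ _),
    b₂.orthonormal.comp_linearIsometry (subtypeₗᵢ _), hli,
    norm_sub_starProjection_eq_iff hle₁ hle₂ b₁ b₂, _, ?_,
    fun v hv _ => fderiv_sum_inner_sq_sub_sum_inner_sq_ne_zero hli hv⟩
  simp only [Fintype.card_sum, Fintype.card_fin] at hcodim
  omega
end
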